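/- arXiv:2208.00342 — 8 statements merged into one kernel-verified Lean document; each statement's English description precedes it below -/
import Mathlib

section
/- Suppose τ : X → X is a non-singular measurable transformation with μ(τ^{-1}(A)) ≤ M·μ(A) for every measurable set A, where M > 0. Then the composition operator C_τ g = g ∘ τ is bounded on the Lorentz space L^{pq}(X) with ‖C_τ g‖_{pq} ≤ M^{1/p} ‖g‖_{pq} for all g ∈ L^{pq}(X), for 1 < p < ∞ and 1 ≤ q ≤ ∞. -/
open MeasureTheory Filter Set
open scoped ENNReal NNReal

/-- Decreasing rearrangement `g*(t)` of a measurable function. -/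
noncomputable def rearr {X : Type*} [MeasurableSpace X] (μ : Measure X) (g : X → ℂ)
    (t : ℝ) : ℝ≥0∞ :=
  sInf {l : ℝ≥0∞ | μ {x | l < (‖g x‖₊ : ℝ≥0∞)} ≤ ENNReal.ofReal t}

/-- Maximal function `g**(t) = (1/t) ∫_0^t g*(s) ds`. -/
noncomputable def maxFun {X : Type*} [MeasurableSpace X] (μ : Measure X) (g : X → ℂ)
    (t : ℝ) : ℝ≥0∞ :=
  (ENNReal.ofReal t)⁻¹ * ∫⁻ s in Set.Ioc (0:ℝ) t, rearr μ g s

/-- `‖g‖_{pq}^q = (q/p) ∫_0^∞ (t^{1/p} g**(t))^q dt/t`. -/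
noncomputable def lorentzQ {X : Type*} [MeasurableSpace X] (μ : Measure X) (g : X → ℂ)
    (p q : ℝ) : ℝ≥0∞ :=
  ENNReal.ofReal (q / p) *
    ∫⁻ t in Set.Ioi (0:ℝ), (ENNReal.ofReal (t ^ (1/p)) * maxFun μ g t) ^ q / ENNReal.ofReal t

/-- The Lorentz norm `‖g‖_{pq}` for `q < ∞`. -/
noncomputable def lorentzNorm {X : Type*} [MeasurableSpace X] (μ : Measure X) (g : X → ℂ)
    (p q : ℝ) : ℝ≥0∞ :=
  lorentzQ μ g p q ^ (1 / q)

/-- The Lorentz norm `‖g‖_{p∞} = sup_{t>0} t^{1/p} g**(t)`. -/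
noncomputable def lorentzSup {X : Type*} [MeasurableSpace X] (μ : Measure X) (g : X → ℂ)
    (p : ℝ) : ℝ≥0∞ :=
  ⨆ (t : ℝ) (_ : 0 < t), ENNReal.ofReal (t ^ (1/p)) * maxFun μ g t

/-- A non-singular measurable transformation. -/
def Nonsingular {X : Type*} [MeasurableSpace X] (μ : Measure X) (τ : X → X) : Prop :=
  Measurable τ ∧ ∀ A : Set X, MeasurableSet A → μ A = 0 → μ (τ ⁻¹' A) = 0

/-! If `μ{|f| > l} ≤ M μ{|g| > l}` at every level `l`, then `f*(s) ≤ g*(s / M)`; the substitution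
`s = M u` turns this into `f**(t) ≤ g**(t / M)`, i.e. `t^{1/p} f**(t) ≤ M^{1/p} (t/M)^{1/p} g**(t/M)`.
Both the supremum over `t > 0` and the integral against `dt / t` are invariant under the dilation
`t ↦ t / M`, which yields the factor `M^{1/p}`. For `f = g ∘ τ` the level-set hypothesis is
`μ(τ⁻¹ A) ≤ M μ(A)` applied to `A = {|g| > l}`. -/

lemma setLIntegral_comp_div {c : ℝ} (hc : 0 < c) (f : ℝ → ℝ≥0∞) (s : Set ℝ) :
    ∫⁻ x in s, f (x / c) = ENNReal.ofReal c * ∫⁻ u in (c * ·) ⁻¹' s, f u := by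
  have he : MeasurableEmbedding (c * ·) := (Homeomorph.mulLeft₀ c hc.ne').measurableEmbedding
  calc ∫⁻ x in s, f (x / c)
      = ∫⁻ x in s, f (x / c) ∂(ENNReal.ofReal |c| • Measure.map (c * ·) volume) := by
        rw [Real.smul_map_volume_mul_left hc.ne']
    _ = ENNReal.ofReal c * ∫⁻ u in (c * ·) ⁻¹' s, f (c * u / c) := by
        rw [Measure.restrict_smul, lintegral_smul_measure, he.restrict_map, he.lintegral_map,
          abs_of_pos hc, smul_eq_mul]
    _ = ENNReal.ofReal c * ∫⁻ u in (c * ·) ⁻¹' s, f u := by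
        simp only [mul_div_cancel_left₀ _ hc.ne']

lemma lintegral_Ioc_comp_div {c : ℝ} (hc : 0 < c) (f : ℝ → ℝ≥0∞) (t : ℝ) :
    ∫⁻ x in Ioc 0 t, f (x / c) = ENNReal.ofReal c * ∫⁻ u in Ioc 0 (t / c), f u := by
  rw [setLIntegral_comp_div hc, preimage_const_mul_Ioc₀ _ _ hc, zero_div]

lemma lintegral_Ioi_comp_div_div_ofReal {c : ℝ} (hc : 0 < c) (f : ℝ → ℝ≥0∞) :
    ∫⁻ t in Ioi 0, f (t / c) / ENNReal.ofReal t = ∫⁻ t in Ioi 0, f t / ENNReal.ofReal t := by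
  have h := setLIntegral_comp_div hc (fun u => f u / ENNReal.ofReal (c * u)) (Ioi 0)
  simp only [mul_div_cancel₀ _ hc.ne', preimage_const_mul_Ioi₀ _ hc, zero_div] at h
  rw [h, ← lintegral_const_mul' _ _ ENNReal.ofReal_ne_top]
  refine setLIntegral_congr_fun measurableSet_Ioi fun u (hu : 0 < u) => ?_
  rw [ENNReal.ofReal_mul hc.le, ← mul_div_assoc,
    ENNReal.mul_div_mul_left _ _ (ENNReal.ofReal_pos.mpr hc).ne' ENNReal.ofReal_ne_top]

lemma maxFun_of_nonpos {X : Type*} [MeasurableSpace X] (μ : Measure X) (g : X → ℂ) {t : ℝ}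
    (ht : t ≤ 0) : maxFun μ g t = 0 := by
  rw [maxFun, Ioc_eq_empty (not_lt.mpr ht), Measure.restrict_empty, lintegral_zero_measure,
    mul_zero]

section Domination

variable {X : Type*} [MeasurableSpace X] {μ : Measure X} {f g : X → ℂ} {M : ℝ}

variable (hM : 0 < M)
  (hfg : ∀ l : ℝ≥0∞, μ {x | l < ‖f x‖₊} ≤ ENNReal.ofReal M * μ {x | l < ‖g x‖₊})
include hM hfg

lemma rearr_le_rearr_div (s : ℝ) : rearr μ f s ≤ rearr μ g (s / M) :=
  sInf_le_sInf fun l (hl : μ {x | l < ‖g x‖₊} ≤ ENNReal.ofReal (s / M)) =>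
    calc μ {x | l < ‖f x‖₊} ≤ ENNReal.ofReal M * ENNReal.ofReal (s / M) := by
          grw [hfg l, hl]
      _ = ENNReal.ofReal s := by rw [← ENNReal.ofReal_mul hM.le, mul_div_cancel₀ s hM.ne']

lemma maxFun_le_maxFun_div (t : ℝ) : maxFun μ f t ≤ maxFun μ g (t / M) := by
  rcases le_or_gt t 0 with ht | ht
  · simp [maxFun_of_nonpos μ f ht]
  calc maxFun μ f t
      ≤ (ENNReal.ofReal t)⁻¹ * ∫⁻ s in Ioc 0 t, rearr μ g (s / M) := by
        unfold maxFun; gcongr with s; exact rearr_le_rearr_div hM hfg s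
    _ = (ENNReal.ofReal t)⁻¹ * ENNReal.ofReal M * ∫⁻ u in Ioc 0 (t / M), rearr μ g u := by
        rw [lintegral_Ioc_comp_div hM, mul_assoc]
    _ = maxFun μ g (t / M) := by
        rw [maxFun, ENNReal.ofReal_div_of_pos hM, ENNReal.inv_div (.inr ENNReal.ofReal_ne_top)
          (.inr (ENNReal.ofReal_pos.mpr ht).ne'), ENNReal.div_eq_inv_mul]

lemma rpow_mul_maxFun_le (p t : ℝ) (ht : 0 < t) :
    ENNReal.ofReal (t ^ (1 / p)) * maxFun μ f t ≤
      ENNReal.ofReal (M ^ (1 / p)) *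
        (ENNReal.ofReal ((t / M) ^ (1 / p)) * maxFun μ g (t / M)) := by
  have hsplit : t ^ (1 / p) = M ^ (1 / p) * (t / M) ^ (1 / p) := by
    rw [← Real.mul_rpow hM.le (div_nonneg ht.le hM.le), mul_div_cancel₀ t hM.ne']
  rw [hsplit, ENNReal.ofReal_mul (Real.rpow_nonneg hM.le _), mul_assoc]
  gcongr
  exact maxFun_le_maxFun_div hM hfg t

lemma lorentzQ_le {p q : ℝ} (hq : 0 ≤ q) :
    lorentzQ μ f p q ≤ ENNReal.ofReal (M ^ (1 / p)) ^ q * lorentzQ μ g p q := by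
  set c := ENNReal.ofReal (M ^ (1 / p))
  calc lorentzQ μ f p q
      ≤ ENNReal.ofReal (q / p) * ∫⁻ t in Ioi 0,
          c ^ q * ((ENNReal.ofReal ((t / M) ^ (1 / p)) * maxFun μ g (t / M)) ^ q
            / ENNReal.ofReal t) := by
        refine mul_le_mul_right (lintegral_mono_ae <| (ae_restrict_mem measurableSet_Ioi).mono
          fun t (ht : 0 < t) => ?_) _
        rw [← mul_div_assoc, ← ENNReal.mul_rpow_of_nonneg _ _ hq]
        gcongr ?_ / _
        exact ENNReal.rpow_le_rpow (rpow_mul_maxFun_le hM hfg p t ht) hq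
    _ = c ^ q * lorentzQ μ g p q := by
        rw [lintegral_const_mul' _ _ (ENNReal.rpow_ne_top_of_nonneg hq ENNReal.ofReal_ne_top),
          lintegral_Ioi_comp_div_div_ofReal hM
            (fun u => (ENNReal.ofReal (u ^ (1 / p)) * maxFun μ g u) ^ q), lorentzQ, mul_left_comm]

lemma lorentzNorm_le {p q : ℝ} (hq : 0 < q) :
    lorentzNorm μ f p q ≤ ENNReal.ofReal (M ^ (1 / p)) * lorentzNorm μ g p q :=
  calc lorentzNorm μ f p q
      ≤ (ENNReal.ofReal (M ^ (1 / p)) ^ q * lorentzQ μ g p q) ^ (1 / q) := by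
        unfold lorentzNorm; gcongr; exact lorentzQ_le hM hfg hq.le
    _ = ENNReal.ofReal (M ^ (1 / p)) * lorentzNorm μ g p q := by
        rw [ENNReal.mul_rpow_of_nonneg _ _ (by positivity), ← ENNReal.rpow_mul,
          mul_one_div_cancel hq.ne', ENNReal.rpow_one, lorentzNorm]

lemma lorentzSup_le (p : ℝ) :
    lorentzSup μ f p ≤ ENNReal.ofReal (M ^ (1 / p)) * lorentzSup μ g p :=
  iSup₂_le fun t ht => (rpow_mul_maxFun_le hM hfg p t ht).trans <| by
    gcongr
    exact le_iSup₂_of_le (f := fun (u : ℝ) (_ : 0 < u) =>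
      ENNReal.ofReal (u ^ (1 / p)) * maxFun μ g u) (t / M) (div_pos ht hM) le_rfl

end Domination

lemma measure_lt_nnnorm_comp_le {X : Type*} [MeasurableSpace X] {μ : Measure X} {τ : X → X}
    {M : ℝ} (hbd : ∀ A : Set X, MeasurableSet A → μ (τ ⁻¹' A) ≤ ENNReal.ofReal M * μ A)
    {g : X → ℂ} (hg : Measurable g) (l : ℝ≥0∞) :
    μ {x | l < ‖(g ∘ τ) x‖₊} ≤ ENNReal.ofReal M * μ {x | l < ‖g x‖₊} :=
  hbd _ (measurableSet_lt measurable_const hg.nnnorm.coe_nnreal_ennreal)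

theorem stmt_4_general {X : Type*} [MeasurableSpace X] (μ : Measure X) (τ : X → X)
    (M : ℝ) (hM : 0 < M)
    (hbd : ∀ A : Set X, MeasurableSet A → μ (τ ⁻¹' A) ≤ ENNReal.ofReal M * μ A)
    (p : ℝ) :
    (∀ q : ℝ, 1 ≤ q → ∀ g : X → ℂ, Measurable g → lorentzNorm μ g p q < ⊤ →
      lorentzNorm μ (g ∘ τ) p q ≤ ENNReal.ofReal (M ^ (1/p)) * lorentzNorm μ g p q) ∧
    (∀ g : X → ℂ, Measurable g → lorentzSup μ g p < ⊤ →
      lorentzSup μ (g ∘ τ) p ≤ ENNReal.ofReal (M ^ (1/p)) * lorentzSup μ g p) :=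
  ⟨fun _q hq _g hg _ =>
    lorentzNorm_le hM (measure_lt_nnnorm_comp_le hbd hg) (one_pos.trans_le hq),
  fun _g hg _ => lorentzSup_le hM (measure_lt_nnnorm_comp_le hbd hg) p⟩

/-- under `μ(τ⁻¹ A) ≤ M μ(A)`, `C_τ` is bounded on `L^{pq}` with
`‖C_τ g‖_{pq} ≤ M^{1/p} ‖g‖_{pq}`, for `1 < p < ∞` and `1 ≤ q ≤ ∞`
(the case `q = ∞` is stated with the `L^{p∞}` norm). -/
theorem stmt_4 {X : Type*} [MeasurableSpace X] (μ : Measure X) (τ : X → X)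
    (hτ : Measurable τ)
    (hns : ∀ A : Set X, MeasurableSet A → μ A = 0 → μ (τ ⁻¹' A) = 0)
    (M : ℝ) (hM : 0 < M)
    (hbd : ∀ A : Set X, MeasurableSet A → μ (τ ⁻¹' A) ≤ ENNReal.ofReal M * μ A)
    (p : ℝ) (hp : 1 < p) :
    (∀ q : ℝ, 1 ≤ q → ∀ g : X → ℂ, Measurable g → lorentzNorm μ g p q < ⊤ →
      lorentzNorm μ (g ∘ τ) p q ≤ ENNReal.ofReal (M ^ (1/p)) * lorentzNorm μ g p q) ∧
    (∀ g : X → ℂ, Measurable g → lorentzSup μ g p < ⊤ →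
      lorentzSup μ (g ∘ τ) p ≤ ENNReal.ofReal (M ^ (1/p)) * lorentzSup μ g p) :=
  stmt_4_general μ τ M hM hbd p
end

section
/- A bounded operator T on a Banach space X is positively expansive (for every x with ‖x‖ = 1 there exists n ∈ ℕ with ‖T^n x‖ ≥ 2) if and only if sup_{n∈ℕ} ‖T^n x‖ = ∞ for every nonzero x ∈ X. -/
/-!
If every unit vector has an iterate of norm at least `c`, then by homogeneity every vector `x` has
an iterate of norm at least `c * ‖x‖`; applying this to that iterate again, the orbit of `x`
contains vectors of norm at least `c ^ k * ‖x‖` for every `k`, which is unbounded when `c > 1`.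
-/

open scoped ENNReal NNReal

theorem iSup_nnnorm_eq_top_iff {E : Type*} [SeminormedAddCommGroup E] (u : ℕ → E) :
    (⨆ n, (‖u n‖₊ : ℝ≥0∞)) = ⊤ ↔ ∀ r : ℝ, ∃ n, r ≤ ‖u n‖ := by
  rw [iSup_eq_top]
  constructor
  · intro h r
    obtain ⟨n, hn⟩ := h (ENNReal.ofReal r) ENNReal.ofReal_lt_top
    rw [← enorm_eq_nnnorm, ← ofReal_norm] at hn
    exact ⟨n, (ENNReal.ofReal_lt_ofReal_iff'.mp hn).1.le⟩
  · intro h b hb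
    lift b to ℝ≥0 using hb.ne
    obtain ⟨n, hn⟩ := h (b + 1)
    refine ⟨n, ?_⟩
    rw [ENNReal.coe_lt_coe, ← NNReal.coe_lt_coe, coe_nnnorm]
    linarith

section Expansive

variable {𝕜 E : Type*} [RCLike 𝕜] [NormedAddCommGroup E] [NormedSpace 𝕜 E] {T : E →L[𝕜] E}
  {c : ℝ}

theorem exists_mul_norm_le_norm_pow_apply (hT : ∀ x : E, ‖x‖ = 1 → ∃ n : ℕ, c ≤ ‖(T ^ n) x‖)
    (x : E) : ∃ n : ℕ, c * ‖x‖ ≤ ‖(T ^ n) x‖ := by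
  rcases eq_or_ne x 0 with rfl | hx
  · exact ⟨0, by simp⟩
  obtain ⟨n, hn⟩ := hT _ (norm_smul_inv_norm (𝕜 := 𝕜) hx)
  refine ⟨n, ?_⟩
  rwa [map_smul, norm_smul, norm_inv, RCLike.norm_ofReal, abs_norm, inv_mul_eq_div,
    le_div_iff₀ (norm_pos_iff.mpr hx)] at hn

theorem exists_pow_mul_norm_le_norm_pow_apply (hc : 0 ≤ c)
    (hT : ∀ x : E, ‖x‖ = 1 → ∃ n : ℕ, c ≤ ‖(T ^ n) x‖) (x : E) (k : ℕ) :
    ∃ n : ℕ, c ^ k * ‖x‖ ≤ ‖(T ^ n) x‖ := by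
  induction k with
  | zero => exact ⟨0, by simp⟩
  | succ k ih =>
    obtain ⟨n, hn⟩ := ih
    obtain ⟨m, hm⟩ := exists_mul_norm_le_norm_pow_apply hT ((T ^ n) x)
    refine ⟨m + n, ?_⟩
    calc c ^ (k + 1) * ‖x‖ = c * (c ^ k * ‖x‖) := by ring
      _ ≤ c * ‖(T ^ n) x‖ := by gcongr
      _ ≤ ‖(T ^ (m + n)) x‖ := by rwa [pow_add, mul_apply_eq_comp]

theorem forall_exists_le_norm_pow_apply (hc : 1 < c)
    (hT : ∀ x : E, ‖x‖ = 1 → ∃ n : ℕ, c ≤ ‖(T ^ n) x‖) {x : E} (hx : x ≠ 0) (r : ℝ) :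
    ∃ n : ℕ, r ≤ ‖(T ^ n) x‖ := by
  have hx' : 0 < ‖x‖ := norm_pos_iff.mpr hx
  obtain ⟨k, hk⟩ := pow_unbounded_of_one_lt (r / ‖x‖) hc
  obtain ⟨n, hn⟩ := exists_pow_mul_norm_le_norm_pow_apply (zero_le_one.trans hc.le) hT x k
  exact ⟨n, ((div_lt_iff₀ hx').mp hk).le.trans hn⟩

end Expansive

theorem stmt_10_general {X : Type*} [NormedAddCommGroup X] [NormedSpace ℝ X]
    (T : X →L[ℝ] X) :
    (∀ x : X, ‖x‖ = 1 → ∃ n : ℕ, 2 ≤ ‖(T ^ n) x‖) ↔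
      ∀ x : X, x ≠ 0 → (⨆ n : ℕ, (‖(T ^ n) x‖₊ : ℝ≥0∞)) = ⊤ := by
  simp only [iSup_nnnorm_eq_top_iff]
  refine ⟨fun hT x hx => forall_exists_le_norm_pow_apply one_lt_two hT hx, fun h x hx => ?_⟩
  exact h x (norm_ne_zero_iff.mp (hx ▸ one_ne_zero)) 2

/-- `T` is positively expansive iff `sup_n ‖T^n x‖ = ∞` for every `x ≠ 0`. -/
theorem stmt_10 {X : Type*} [NormedAddCommGroup X] [NormedSpace ℝ X] [CompleteSpace X]
    (T : X →L[ℝ] X) :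
    (∀ x : X, ‖x‖ = 1 → ∃ n : ℕ, 2 ≤ ‖(T ^ n) x‖) ↔
      ∀ x : X, x ≠ 0 → (⨆ n : ℕ, (‖(T ^ n) x‖₊ : ℝ≥0∞)) = ⊤ :=
  stmt_10_general T
end

section
/- A bounded operator T on a Banach space X is uniformly positively expansive (there exists n ∈ ℕ such that ‖T^n x‖ ≥ 2 for all x with ‖x‖ = 1) if and only if lim_{n→∞} ‖T^n x‖ = ∞ uniformly on the unit sphere S_X. -/
/-!
By homogeneity, `2 ≤ ‖T^n x‖` on the unit sphere means `2‖x‖ ≤ ‖T^n x‖` everywhere, hence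
`2^k ‖x‖ ≤ ‖T^(nk) x‖`. Any `T^m` is followed by at most `n` more steps to reach a multiple of `n`,
and the operator norms of `T^0, …, T^n` are bounded, so `‖T^m x‖` also grows like `2^(m/n) ‖x‖`.
-/

theorem mul_norm_le_norm_apply_of_forall_norm_eq_one {𝕜 E F : Type*} [RCLike 𝕜]
    [NormedAddCommGroup E] [NormedAddCommGroup F] [NormedSpace 𝕜 E] [NormedSpace 𝕜 F]
    (f : E →L[𝕜] F) {c : ℝ} (h : ∀ x, ‖x‖ = 1 → c ≤ ‖f x‖) (x : E) :
    c * ‖x‖ ≤ ‖f x‖ := by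
  obtain rfl | hx := eq_or_ne x 0
  · simp
  simpa [norm_smul, field] using h ((‖x‖⁻¹ : 𝕜) • x) (norm_smul_inv_norm hx)

theorem pow_mul_norm_le_norm_iterate {E : Type*} [SeminormedAddCommGroup E] {f : E → E} {c : ℝ}
    (hc : 0 ≤ c) (hf : ∀ x, c * ‖x‖ ≤ ‖f x‖) (k : ℕ) (x : E) :
    c ^ k * ‖x‖ ≤ ‖f^[k] x‖ := by
  induction k with
  | zero => simp
  | succ k ih =>
    calc c ^ (k + 1) * ‖x‖ = c * (c ^ k * ‖x‖) := by ring
      _ ≤ c * ‖f^[k] x‖ := by gcongr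
      _ ≤ ‖f^[k + 1] x‖ := by rw [Function.iterate_succ_apply']; exact hf _

theorem ContinuousLinearMap.exists_forall_ge_mul_norm_le_norm_pow_apply {𝕜 E : Type*}
    [NontriviallyNormedField 𝕜] [SeminormedAddCommGroup E] [NormedSpace 𝕜 E] (T : E →L[𝕜] E)
    {n : ℕ} {c : ℝ} (hc : 1 < c) (hT : ∀ x, c * ‖x‖ ≤ ‖(T ^ n) x‖) (M : ℝ) :
    ∃ N, ∀ m ≥ N, ∀ x, M * ‖x‖ ≤ ‖(T ^ m) x‖ := by
  rcases n.eq_zero_or_pos with rfl | hn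
  · refine ⟨0, fun m _ x => ?_⟩
    have hx : ‖x‖ = 0 := by nlinarith [norm_nonneg x, show c * ‖x‖ ≤ ‖x‖ by simpa using hT x]
    simp [hx]
  obtain ⟨C, hC, hTC⟩ : ∃ C > 0, ∀ j ≤ n, ‖T ^ j‖ ≤ C :=
    ⟨1 + ∑ j ∈ Finset.range (n + 1), ‖T ^ j‖, by positivity, fun j hj =>
      le_add_of_nonneg_of_le zero_le_one (Finset.single_le_sum (fun i _ => norm_nonneg (T ^ i))
        (Finset.mem_range_succ_iff.mpr hj))⟩
  obtain ⟨K, hK⟩ := pow_unbounded_of_one_lt (M * C) hc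
  refine ⟨n * K, fun m hm x => ?_⟩
  set k := m / n + 1
  have hmk : m ≤ n * k ∧ n * k - m ≤ n := by
    have := Nat.div_add_mod m n
    have := Nat.mod_lt m hn
    simp only [k, mul_add, mul_one]
    omega
  have hKk : K ≤ k := Nat.le_succ_of_le <| (Nat.le_div_iff_mul_le hn).mpr (by linarith)
  have hupper : ‖(T ^ (n * k)) x‖ ≤ C * ‖(T ^ m) x‖ := by
    rw [← Nat.sub_add_cancel hmk.1, pow_add, mul_apply_eq_comp]
    exact ((T ^ (n * k - m)).le_opNorm _).trans (by gcongr; exact hTC _ hmk.2)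
  have hlower : c ^ k * ‖x‖ ≤ ‖(T ^ (n * k)) x‖ := by
    rw [pow_mul, FunLike.coe_pow_eq_iterate]
    exact pow_mul_norm_le_norm_iterate (by positivity) hT k x
  have hcK : M * C ≤ c ^ k := hK.le.trans (pow_le_pow_right₀ hc.le hKk)
  refine le_of_mul_le_mul_left ?_ hC
  calc C * (M * ‖x‖) = M * C * ‖x‖ := by ring
    _ ≤ c ^ k * ‖x‖ := by gcongr
    _ ≤ C * ‖(T ^ m) x‖ := hlower.trans hupper

theorem stmt_11_general {X : Type*} [NormedAddCommGroup X] [NormedSpace ℝ X]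
    (T : X →L[ℝ] X) :
    (∃ n : ℕ, ∀ x : X, ‖x‖ = 1 → 2 ≤ ‖(T ^ n) x‖) ↔
      ∀ M : ℝ, 0 < M → ∃ N : ℕ, ∀ n ≥ N, ∀ x : X, ‖x‖ = 1 → M ≤ ‖(T ^ n) x‖ := by
  constructor
  · rintro ⟨n, hn⟩ M -
    obtain ⟨N, hN⟩ := T.exists_forall_ge_mul_norm_le_norm_pow_apply one_lt_two
      (mul_norm_le_norm_apply_of_forall_norm_eq_one (T ^ n) hn) M
    exact ⟨N, fun m hm x hx => by simpa [hx] using hN m hm x⟩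
  · intro h
    obtain ⟨N, hN⟩ := h 2 two_pos
    exact ⟨N, hN N le_rfl⟩

/-- `T` is uniformly positively expansive iff `‖T^n x‖ → ∞`
uniformly on the unit sphere. -/
theorem stmt_11 {X : Type*} [NormedAddCommGroup X] [NormedSpace ℝ X] [CompleteSpace X]
    (T : X →L[ℝ] X) :
    (∃ n : ℕ, ∀ x : X, ‖x‖ = 1 → 2 ≤ ‖(T ^ n) x‖) ↔
      ∀ M : ℝ, 0 < M → ∃ N : ℕ, ∀ n ≥ N, ∀ x : X, ‖x‖ = 1 → M ≤ ‖(T ^ n) x‖ :=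
  stmt_11_general T
end

section
/- Let (X, 𝔄, μ) be a σ-finite measure space and τ : X → X a non-singular measurable transformation such that the composition operator C_τ is bounded on L^{pq}(X) (1 < p < ∞, 1 ≤ q < ∞). If C_τ is positively expansive, then for every measurable set A with 0 < μ(A) < ∞ one has sup_{n∈ℕ} μ(τ^{-n}(A)) = ∞. -/
open MeasureTheory Filter Set
open scoped ENNReal NNReal

/-!
For `B` of finite measure the decreasing rearrangement of `c • 𝟙_B` is `‖c‖ • 𝟙_[0, μ B)`, and a
direct computation gives `‖c • 𝟙_B‖_{pq} = ‖c‖ (p / (p - 1))^{1/q} μ(B)^{1/p}`. Normalising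
`𝟙_{τ^{-n} A}` and applying positive expansivity therefore produces `m` with
`μ(τ^{-(n+m)} A)^{1/p} ≥ 2 μ(τ^{-n} A)^{1/p}`; iterating, these powers are unbounded.
-/

theorem ENNReal.iSup_eq_top_of_exists_two_mul_le {u : ℕ → ℝ≥0∞} (h0 : u 0 ≠ 0)
    (h : ∀ n, u n ≠ ⊤ → ∃ m, 2 * u n ≤ u m) : ⨆ n, u n = ⊤ := by
  by_contra hS
  have hfin : ∀ n, u n ≠ ⊤ := fun n => ne_top_of_le_ne_top hS (le_iSup u n)
  have hpow : ∀ k : ℕ, ∃ n, 2 ^ k * u 0 ≤ u n := by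
    intro k
    induction k with
    | zero => exact ⟨0, by simp⟩
    | succ k ih =>
      obtain ⟨n, hn⟩ := ih
      obtain ⟨m, hm⟩ := h n (hfin n)
      refine ⟨m, ?_⟩
      calc 2 ^ (k + 1) * u 0 = 2 * (2 ^ k * u 0) := by rw [pow_succ', mul_assoc]
        _ ≤ 2 * u n := by gcongr
        _ ≤ u m := hm
  obtain ⟨k, hk⟩ := ENNReal.exists_nat_gt (ENNReal.div_lt_top hS h0).ne
  obtain ⟨n, hn⟩ := hpow k
  have hk2 : (k : ℝ≥0∞) ≤ 2 ^ k := by exact_mod_cast Nat.lt_two_pow_self.le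
  have := (ENNReal.div_lt_iff (.inl h0) (.inl (hfin 0))).1 (hk.trans_le hk2)
  exact (hn.trans (le_iSup u n)).not_gt this

lemma lintegral_Ioc_zero_ofReal_rpow {r M : ℝ} (hr : 0 < r) (hM : 0 ≤ M) :
    ∫⁻ t in Ioc 0 M, ENNReal.ofReal (t ^ (r - 1)) = ENNReal.ofReal (M ^ r / r) := by
  have hi : IntervalIntegrable (fun t : ℝ => t ^ (r - 1)) volume 0 M :=
    intervalIntegral.intervalIntegrable_rpow' (by linarith)
  rw [intervalIntegrable_iff_integrableOn_Ioc_of_le hM] at hi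
  rw [← ofReal_integral_eq_lintegral_ofReal hi
    ((ae_restrict_iff' measurableSet_Ioc).2 (.of_forall fun t ht => Real.rpow_nonneg ht.1.le _)),
    ← intervalIntegral.integral_of_le hM, integral_rpow (.inl (by linarith))]
  simp [Real.zero_rpow hr.ne']

lemma lintegral_Ioi_ofReal_rpow {a c : ℝ} (ha : a < -1) (hc : 0 < c) :
    ∫⁻ t in Ioi c, ENNReal.ofReal (t ^ a) = ENNReal.ofReal (-c ^ (a + 1) / (a + 1)) := by
  rw [← ofReal_integral_eq_lintegral_ofReal (integrableOn_Ioi_rpow_of_lt ha hc)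
    ((ae_restrict_iff' measurableSet_Ioi).2
      (.of_forall fun t ht => Real.rpow_nonneg (hc.trans ht).le _)),
    integral_Ioi_rpow_of_lt ha hc]

lemma lintegral_Ioc_zero_ite_ofReal_lt (m : ℝ≥0∞) (t : ℝ) :
    ∫⁻ s in Ioc 0 t, (if ENNReal.ofReal s < m then 1 else 0) = min (ENNReal.ofReal t) m := by
  rcases eq_top_or_lt_top m with rfl | hm
  · simp
  obtain ⟨M, hM, rfl⟩ : ∃ M : ℝ, 0 ≤ M ∧ m = ENNReal.ofReal M :=
    ⟨m.toReal, ENNReal.toReal_nonneg, (ENNReal.ofReal_toReal hm.ne).symm⟩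
  calc ∫⁻ s in Ioc 0 t, (if ENNReal.ofReal s < ENNReal.ofReal M then 1 else 0)
      = ∫⁻ s in Ioc 0 t, (Iio M).indicator 1 s := by
        refine setLIntegral_congr_fun measurableSet_Ioc fun s hs => ?_
        simp [indicator_apply, ENNReal.ofReal_lt_ofReal_iff_of_nonneg hs.1.le]
    _ = volume (Ioc 0 t ∩ Iic M) := by
        rw [lintegral_indicator_one measurableSet_Iio, Measure.restrict_apply measurableSet_Iio,
          inter_comm]
        exact measure_congr ((ae_eq_refl _).inter Iio_ae_eq_Iic)
    _ = min (ENNReal.ofReal t) (ENNReal.ofReal M) := by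
        rw [Ioc_inter_Iic, Real.volume_Ioc, sub_zero, ENNReal.ofReal_min]

lemma ofReal_rpow_one_div_mul_ofReal_rpow_div {p q t x : ℝ} (hq : 0 < q) (ht : 0 < t)
    (hx : 0 ≤ x) :
    (ENNReal.ofReal (t ^ (1 / p)) * ENNReal.ofReal x) ^ q / ENNReal.ofReal t
      = ENNReal.ofReal (x ^ q * t ^ (q / p - 1)) := by
  rw [← ENNReal.ofReal_mul (by positivity), ENNReal.ofReal_rpow_of_nonneg (by positivity) hq.le,
    ← ENNReal.ofReal_div_of_pos ht, Real.mul_rpow (by positivity) hx, ← Real.rpow_mul ht.le,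
    Real.rpow_sub_one ht.ne']
  congr 1
  ring_nf

lemma lintegral_Ioi_rpow_mul_min_div {p q : ℝ} (hp : 1 < p) (hq : 0 < q) {m : ℝ≥0∞}
    (hm : m ≠ ⊤) :
    ∫⁻ t in Ioi 0,
        (ENNReal.ofReal (t ^ (1 / p)) * (min (ENNReal.ofReal t) m / ENNReal.ofReal t)) ^ q
          / ENNReal.ofReal t
      = ENNReal.ofReal (p / q * (p / (p - 1))) * m ^ (q / p) := by
  obtain ⟨M, hM, rfl⟩ : ∃ M : ℝ, 0 ≤ M ∧ m = ENNReal.ofReal M :=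
    ⟨m.toReal, ENNReal.toReal_nonneg, (ENNReal.ofReal_toReal hm).symm⟩
  have hp0 : 0 < p := by linarith
  rcases hM.eq_or_lt with rfl | hM
  · simp [ENNReal.zero_rpow_of_pos hq, ENNReal.zero_rpow_of_pos (div_pos hq hp0)]
  have hIoc : ∀ t ∈ Ioc 0 M, (ENNReal.ofReal (t ^ (1 / p)) *
      (min (ENNReal.ofReal t) (ENNReal.ofReal M) / ENNReal.ofReal t)) ^ q / ENNReal.ofReal t
        = ENNReal.ofReal (t ^ (q / p - 1)) := by
    rintro t ⟨ht, htM⟩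
    rw [min_eq_left (ENNReal.ofReal_le_ofReal htM),
      ENNReal.div_self (by simpa using ht) ENNReal.ofReal_ne_top, ← ENNReal.ofReal_one,
      ofReal_rpow_one_div_mul_ofReal_rpow_div hq ht zero_le_one, Real.one_rpow, one_mul]
  have hIoi : ∀ t ∈ Ioi M, (ENNReal.ofReal (t ^ (1 / p)) *
      (min (ENNReal.ofReal t) (ENNReal.ofReal M) / ENNReal.ofReal t)) ^ q / ENNReal.ofReal t
        = ENNReal.ofReal (M ^ q) * ENNReal.ofReal (t ^ (q / p - q - 1)) := by
    intro t ht
    have ht0 : 0 < t := hM.trans ht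
    rw [min_eq_right (ENNReal.ofReal_le_ofReal (le_of_lt ht)), ← ENNReal.ofReal_div_of_pos ht0,
      ofReal_rpow_one_div_mul_ofReal_rpow_div hq ht0 (by positivity), Real.div_rpow hM.le ht0.le,
      ← ENNReal.ofReal_mul (by positivity)]
    congr 1
    simp only [Real.rpow_sub ht0, Real.rpow_one]
    field_simp
  rw [← Ioc_union_Ioi_eq_Ioi hM.le, lintegral_union measurableSet_Ioi (Ioc_disjoint_Ioi le_rfl),
    setLIntegral_congr_fun measurableSet_Ioc hIoc, setLIntegral_congr_fun measurableSet_Ioi hIoi,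
    lintegral_const_mul' _ _ ENNReal.ofReal_ne_top,
    lintegral_Ioc_zero_ofReal_rpow (by positivity) hM.le,
    lintegral_Ioi_ofReal_rpow (by linarith [div_lt_self hq hp]) hM]
  have hexponent : q / p - q - 1 + 1 = q / p - q := by ring
  have hneg : q / p - q < 0 := by linarith [div_lt_self hq hp]
  rw [hexponent, ENNReal.ofReal_rpow_of_nonneg hM.le (by positivity),
    ← ENNReal.ofReal_mul (by positivity),
    ← ENNReal.ofReal_mul (by positivity), ← ENNReal.ofReal_add (by positivity)
      (mul_nonneg (by positivity) (div_nonneg_of_nonpos (neg_nonpos.2 (by positivity)) hneg.le))]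
  congr 1
  rw [Real.rpow_sub hM]
  have : p - 1 ≠ 0 := by linarith
  have : 1 - p ≠ 0 := by linarith
  field_simp
  ring

section

variable {X : Type*} [MeasurableSpace X] (μ : Measure X)

lemma rearr_indicator_const (B : Set X) (c : ℂ) (s : ℝ) :
    rearr μ (B.indicator fun _ => c) s = if ENNReal.ofReal s < μ B then ‖c‖ₑ else 0 := by
  have hlevel : ∀ l : ℝ≥0∞, {x | l < (‖B.indicator (fun _ => c) x‖₊ : ℝ≥0∞)}
      = if l < ‖c‖ₑ then B else ∅ := by
    intro l
    ext x
    by_cases hx : x ∈ B <;> simp [hx, enorm_eq_nnnorm]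
  simp only [rearr, hlevel]
  split_ifs with hs
  · have : {l : ℝ≥0∞ | μ (if l < ‖c‖ₑ then B else ∅) ≤ ENNReal.ofReal s} = Ici ‖c‖ₑ := by
      ext l
      by_cases hl : l < ‖c‖ₑ <;> simp [hl, hs.not_ge, not_lt.mp]
    rw [this, csInf_Ici]
  · refine le_antisymm (sInf_le ?_) bot_le
    show μ (if (0 : ℝ≥0∞) < ‖c‖ₑ then B else ∅) ≤ _
    split_ifs <;> simp_all

lemma maxFun_indicator_const (B : Set X) (c : ℂ) (t : ℝ) :
    maxFun μ (B.indicator fun _ => c) t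
      = ‖c‖ₑ * (min (ENNReal.ofReal t) (μ B) / ENNReal.ofReal t) := by
  have hint : (fun s => rearr μ (B.indicator fun _ => c) s) =
      fun s => ‖c‖ₑ * if ENNReal.ofReal s < μ B then 1 else 0 := by
    ext s; simp [rearr_indicator_const]
  rw [maxFun, hint, lintegral_const_mul' _ _ enorm_ne_top, lintegral_Ioc_zero_ite_ofReal_lt,
    div_eq_mul_inv]
  ring

lemma lorentzQ_indicator_const {p q : ℝ} (hp : 1 < p) (hq : 0 < q) {B : Set X} (hB : μ B ≠ ⊤)
    (c : ℂ) :
    lorentzQ μ (B.indicator fun _ => c) p q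
      = ‖c‖ₑ ^ q * ENNReal.ofReal (p / (p - 1)) * μ B ^ (q / p) := by
  have hp0 : 0 < p := by linarith
  have hint : ∀ t : ℝ, (ENNReal.ofReal (t ^ (1 / p)) * maxFun μ (B.indicator fun _ => c) t) ^ q
      / ENNReal.ofReal t = ‖c‖ₑ ^ q * ((ENNReal.ofReal (t ^ (1 / p)) *
        (min (ENNReal.ofReal t) (μ B) / ENNReal.ofReal t)) ^ q / ENNReal.ofReal t) := by
    intro t
    rw [maxFun_indicator_const, mul_left_comm, ENNReal.mul_rpow_of_nonneg _ _ hq.le, mul_div_assoc]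
  rw [lorentzQ, funext hint,
    lintegral_const_mul' _ _ (ENNReal.rpow_ne_top_of_nonneg hq.le enorm_ne_top),
    lintegral_Ioi_rpow_mul_min_div hp hq hB, mul_left_comm, ← mul_assoc (ENNReal.ofReal _),
    ← ENNReal.ofReal_mul (by positivity), ← mul_assoc, ← mul_assoc, div_mul_div_comm, mul_comm q p,
    div_self (by positivity), one_mul]

lemma lorentzNorm_indicator_const {p q : ℝ} (hp : 1 < p) (hq : 0 < q) {B : Set X} (hB : μ B ≠ ⊤)
    (c : ℂ) :
    lorentzNorm μ (B.indicator fun _ => c) p q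
      = ‖c‖ₑ * ENNReal.ofReal (p / (p - 1)) ^ (1 / q) * μ B ^ (1 / p) := by
  rw [lorentzNorm, lorentzQ_indicator_const μ hp hq hB,
    ENNReal.mul_rpow_of_nonneg _ _ (by positivity), ENNReal.mul_rpow_of_nonneg _ _ (by positivity),
    ← ENNReal.rpow_mul, ← ENNReal.rpow_mul, mul_one_div_cancel hq.ne', ENNReal.rpow_one,
    div_mul_div_comm, mul_one, mul_comm p, ← div_div, div_self hq.ne']

def PositivelyExpansive (τ : X → X) (p q : ℝ) : Prop :=
  ∀ g : X → ℂ, Measurable g → lorentzNorm μ g p q = 1 →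
    ∃ n : ℕ, 2 ≤ lorentzNorm μ (g ∘ τ^[n]) p q

lemma PositivelyExpansive.exists_two_mul_rpow_le {τ : X → X} {p q : ℝ}
    (hexp : PositivelyExpansive μ τ p q) (hp : 1 < p) (hq : 0 < q) {B : Set X}
    (hB : MeasurableSet B) (hBtop : μ B ≠ ⊤) :
    ∃ m : ℕ, 2 * μ B ^ (1 / p) ≤ μ (τ^[m] ⁻¹' B) ^ (1 / p) := by
  have hp0 : 0 < 1 / p := by positivity
  rcases eq_or_ne (μ B) 0 with hB0 | hB0
  · exact ⟨0, by rw [hB0, ENNReal.zero_rpow_of_pos hp0, mul_zero]; positivity⟩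
  set K := ENNReal.ofReal (p / (p - 1)) ^ (1 / q)
  have hK0 : K ≠ 0 := by
    have : 0 < p / (p - 1) := div_pos (by linarith) (by linarith)
    simp [K, ENNReal.rpow_eq_zero_iff, this, hq]
  have hKtop : K ≠ ⊤ := ENNReal.rpow_ne_top_of_nonneg (by positivity) ENNReal.ofReal_ne_top
  set x := K * μ B ^ (1 / p)
  have hx0 : x ≠ 0 := mul_ne_zero hK0 (ENNReal.rpow_pos (pos_iff_ne_zero.2 hB0) hBtop).ne'
  have hxtop : x ≠ ⊤ := ENNReal.mul_ne_top hKtop (ENNReal.rpow_ne_top_of_nonneg hp0.le hBtop)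
  have hc : ‖((x⁻¹.toReal : ℝ) : ℂ)‖ₑ = x⁻¹ := by
    rw [← ofReal_norm, Complex.norm_real, Real.norm_of_nonneg ENNReal.toReal_nonneg,
      ENNReal.ofReal_toReal (ENNReal.inv_ne_top.2 hx0)]
  have hg : lorentzNorm μ (B.indicator fun _ => ((x⁻¹.toReal : ℝ) : ℂ)) p q = 1 := by
    rw [lorentzNorm_indicator_const μ hp hq hBtop, hc, mul_assoc, ENNReal.inv_mul_cancel hx0 hxtop]
  obtain ⟨m, hm⟩ := hexp _ (measurable_const.indicator hB) hg
  refine ⟨m, ?_⟩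
  rcases eq_or_ne (μ (τ^[m] ⁻¹' B)) ⊤ with htop | htop
  · rw [htop, ENNReal.top_rpow_of_pos hp0]
    exact le_top
  have hcomp : (B.indicator fun _ => ((x⁻¹.toReal : ℝ) : ℂ)) ∘ τ^[m]
      = (τ^[m] ⁻¹' B).indicator fun _ => ((x⁻¹.toReal : ℝ) : ℂ) :=
    funext fun _ => (indicator_comp_right _).symm
  rw [hcomp, lorentzNorm_indicator_const μ hp hq htop, hc, mul_assoc, ← ENNReal.div_eq_inv_mul,
    ENNReal.le_div_iff_mul_le (.inl hx0) (.inl hxtop)] at hm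
  rw [← ENNReal.mul_le_mul_iff_right hK0 hKtop, mul_left_comm]
  exact hm

end

theorem stmt_12_general {X : Type*} [MeasurableSpace X] (μ : Measure X)
    (τ : X → X) (hns : Nonsingular μ τ)
    (p q : ℝ) (hp : 1 < p) (hq : 1 ≤ q)
    (hexp : ∀ g : X → ℂ, Measurable g → lorentzNorm μ g p q = 1 →
      ∃ n : ℕ, 2 ≤ lorentzNorm μ (g ∘ τ^[n]) p q) :
    ∀ A : Set X, MeasurableSet A → 0 < μ A → μ A < ⊤ →
      (⨆ n : ℕ, μ ((τ^[n]) ⁻¹' A)) = ⊤ := by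
  intro A hA hA0 hAtop
  by_contra hS
  have hfin : ∀ n, μ (τ^[n] ⁻¹' A) ≠ ⊤ := fun n =>
    ne_top_of_le_ne_top hS (le_iSup (fun n => μ (τ^[n] ⁻¹' A)) n)
  have hp0 : 0 < 1 / p := by positivity
  have hgrowth : ⨆ n : ℕ, μ (τ^[n] ⁻¹' A) ^ (1 / p) = ⊤ := by
    refine ENNReal.iSup_eq_top_of_exists_two_mul_le
      (by simpa using (ENNReal.rpow_pos hA0 hAtop.ne).ne') fun n _ => ?_
    obtain ⟨m, hm⟩ := PositivelyExpansive.exists_two_mul_rpow_le μ hexp hp (by linarith)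
      (hns.1.iterate n hA) (hfin n)
    exact ⟨n + m, by rwa [Function.iterate_add, preimage_comp]⟩
  have hbound : ⨆ n : ℕ, μ (τ^[n] ⁻¹' A) ^ (1 / p) ≤ (⨆ n : ℕ, μ (τ^[n] ⁻¹' A)) ^ (1 / p) :=
    iSup_le fun n => ENNReal.rpow_le_rpow (le_iSup (fun n => μ (τ^[n] ⁻¹' A)) n) hp0.le
  rw [hgrowth, top_le_iff] at hbound
  exact ENNReal.rpow_ne_top_of_nonneg hp0.le hS hbound

/-- if `C_τ` is positively expansive then `sup_n μ(τ^{-n} A) = ∞`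
for every measurable `A` with `0 < μ(A) < ∞`. -/
theorem stmt_12 {X : Type*} [MeasurableSpace X] (μ : Measure X) [SigmaFinite μ]
    (τ : X → X) (hns : Nonsingular μ τ)
    (p q : ℝ) (hp : 1 < p) (hq : 1 ≤ q)
    (hbdd : ∃ C : ℝ≥0∞, C < ⊤ ∧
      ∀ g : X → ℂ, lorentzNorm μ (g ∘ τ) p q ≤ C * lorentzNorm μ g p q)
    (hexp : ∀ g : X → ℂ, Measurable g → lorentzNorm μ g p q = 1 →
      ∃ n : ℕ, 2 ≤ lorentzNorm μ (g ∘ τ^[n]) p q) :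
    ∀ A : Set X, MeasurableSet A → 0 < μ A → μ A < ⊤ →
      (⨆ n : ℕ, μ ((τ^[n]) ⁻¹' A)) = ⊤ :=
  stmt_12_general μ τ hns p q hp hq hexp
end

section
/- Let (X, 𝔄, μ) be a σ-finite measure space and τ : X → X a non-singular measurable transformation with C_τ bounded on L^{pq}(X) (1 < p < ∞, 1 ≤ q < ∞). If for every measurable set A with 0 < μ(A) < ∞ one has sup_{n∈ℕ} μ(τ^{-n}(A)) = ∞, then C_τ is positively expansive, i.e. sup_{n∈ℕ} ‖C_τ^n g‖_{pq} = ∞ for every nonzero g ∈ L^{pq}(X). -/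
open MeasureTheory Filter Set
open scoped ENNReal NNReal

/-!
If `g ≠ 0`, some level set `{h < ‖g‖}` has positive measure, and by σ-finiteness it contains
a measurable `A` with `0 < μ A < ∞`. The level set `{h < ‖g ∘ τ^[n]‖}` contains `τ^[n] ⁻¹' A`,
whose measure exceeds any given `T` for suitable `n`. A level set of measure `> T` forces
`g* ≥ h`, hence `g** ≥ h`, on `(0, T]`, which gives the Chebyshev-type bound
`‖g ∘ τ^[n]‖_{pq} ≥ h T^{1/p}`; as `T` is arbitrary, the supremum is infinite.
-/

open Topology

lemma lintegral_Ioc_ofReal_rpow {r : ℝ} (hr : -1 < r) {T : ℝ} (hT : 0 < T) :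
    ∫⁻ t in Ioc (0 : ℝ) T, ENNReal.ofReal (t ^ r) = ENNReal.ofReal (T ^ (r + 1) / (r + 1)) := by
  rw [← ofReal_integral_eq_lintegral_ofReal, ← intervalIntegral.integral_of_le hT.le,
    integral_rpow (Or.inl hr), Real.zero_rpow (by linarith), sub_zero]
  · exact (intervalIntegral.intervalIntegrable_rpow' hr).1
  · exact ae_restrict_of_forall_mem measurableSet_Ioc fun t ht ↦ Real.rpow_nonneg ht.1.le r

lemma exists_measure_lt_nnnorm_ne_zero {X E : Type*} [MeasurableSpace X] [NormedAddCommGroup E]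
    {μ : Measure X} {f : X → E} (hf : ¬ f =ᵐ[μ] 0) :
    ∃ h : ℝ≥0∞, h ≠ 0 ∧ μ {x | h < (‖f x‖₊ : ℝ≥0∞)} ≠ 0 := by
  by_contra! H
  refine hf (ae_iff.2 (measure_mono_null ?_ (measure_iUnion_null fun n : ℕ ↦
    H (n : ℝ≥0∞)⁻¹ (ENNReal.inv_ne_zero.2 (ENNReal.natCast_ne_top n)))))
  intro x hx
  exact mem_iUnion.2 (ENNReal.exists_inv_nat_lt (by simpa using hx))

section LowerBounds

variable {X : Type*} [MeasurableSpace X] {μ : Measure X} {f : X → ℂ} {h : ℝ≥0∞} {T : ℝ}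

lemma le_rearr_of_ofReal_lt_measure {s : ℝ}
    (hs : ENNReal.ofReal s < μ {x | h < (‖f x‖₊ : ℝ≥0∞)}) : h ≤ rearr μ f s :=
  le_sInf fun _ hl ↦ not_lt.1 fun hlh ↦
    (measure_mono fun _ hx ↦ hlh.trans hx).trans hl |>.not_gt hs

lemma le_maxFun_of_ofReal_lt_measure (hT : ENNReal.ofReal T < μ {x | h < (‖f x‖₊ : ℝ≥0∞)})
    {t : ℝ} (ht : t ∈ Ioc 0 T) : h ≤ maxFun μ f t := by
  have hint : h * ENNReal.ofReal t ≤ ∫⁻ s in Ioc (0 : ℝ) t, rearr μ f s := by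
    calc h * ENNReal.ofReal t = ∫⁻ _ in Ioc (0 : ℝ) t, h := by
          rw [setLIntegral_const, Real.volume_Ioc, sub_zero]
      _ ≤ _ := setLIntegral_mono' measurableSet_Ioc fun s hs ↦ le_rearr_of_ofReal_lt_measure <|
          (ENNReal.ofReal_le_ofReal (hs.2.trans ht.2)).trans_lt hT
  have ht0 : ENNReal.ofReal t ≠ 0 := by simpa using ht.1
  calc h = (ENNReal.ofReal t)⁻¹ * (h * ENNReal.ofReal t) := by
        rw [mul_comm h, ← mul_assoc, ENNReal.inv_mul_cancel ht0 ENNReal.ofReal_ne_top, one_mul]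
    _ ≤ maxFun μ f t := mul_le_mul_right hint _

lemma rpow_mul_ofReal_rpow_le_lorentzQ {p q : ℝ} (hp : 0 < p) (hq : 0 < q) (hT0 : 0 < T)
    (hT : ENNReal.ofReal T < μ {x | h < (‖f x‖₊ : ℝ≥0∞)}) :
    h ^ q * ENNReal.ofReal (T ^ (q / p)) ≤ lorentzQ μ f p q := by
  have hpointwise : ∀ t ∈ Ioc (0 : ℝ) T, h ^ q * ENNReal.ofReal (t ^ (q / p - 1)) ≤
      (ENNReal.ofReal (t ^ (1 / p)) * maxFun μ f t) ^ q / ENNReal.ofReal t := by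
    intro t ht
    calc h ^ q * ENNReal.ofReal (t ^ (q / p - 1))
        = (ENNReal.ofReal (t ^ (1 / p)) * h) ^ q / ENNReal.ofReal t := by
          rw [ENNReal.mul_rpow_of_nonneg _ _ hq.le,
            ENNReal.ofReal_rpow_of_pos (Real.rpow_pos_of_pos ht.1 _), ← Real.rpow_mul ht.1.le,
            mul_comm (ENNReal.ofReal _), mul_div_assoc, ← ENNReal.ofReal_div_of_pos ht.1,
            Real.rpow_sub ht.1, Real.rpow_one, one_div_mul_eq_div]
      _ ≤ _ := by gcongr; exact le_maxFun_of_ofReal_lt_measure hT ht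
  have hqp : 0 < q / p := div_pos hq hp
  have hmeas : Measurable fun t : ℝ ↦ ENNReal.ofReal (t ^ (q / p - 1)) := by fun_prop
  calc h ^ q * ENNReal.ofReal (T ^ (q / p))
      = ENNReal.ofReal (q / p) *
          ∫⁻ t in Ioc (0 : ℝ) T, h ^ q * ENNReal.ofReal (t ^ (q / p - 1)) := by
        rw [lintegral_const_mul _ hmeas, lintegral_Ioc_ofReal_rpow (by linarith) hT0,
          sub_add_cancel, mul_left_comm, ← ENNReal.ofReal_mul hqp.le,
          mul_div_cancel₀ _ hqp.ne']
    _ ≤ ENNReal.ofReal (q / p) * ∫⁻ t in Ioi (0 : ℝ),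
          (ENNReal.ofReal (t ^ (1 / p)) * maxFun μ f t) ^ q / ENNReal.ofReal t := by
        refine mul_le_mul_right ?_ _
        exact (setLIntegral_mono' measurableSet_Ioc hpointwise).trans
          (lintegral_mono_set Ioc_subset_Ioi_self)
    _ = lorentzQ μ f p q := rfl

lemma mul_ofReal_rpow_le_lorentzNorm {p q : ℝ} (hp : 0 < p) (hq : 0 < q) (hT0 : 0 < T)
    (hT : ENNReal.ofReal T < μ {x | h < (‖f x‖₊ : ℝ≥0∞)}) :
    h * ENNReal.ofReal (T ^ (1 / p)) ≤ lorentzNorm μ f p q := by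
  have := ENNReal.rpow_le_rpow (rpow_mul_ofReal_rpow_le_lorentzQ hp hq hT0 hT) (z := 1 / q)
    (by positivity)
  rwa [ENNReal.mul_rpow_of_nonneg _ _ (by positivity), one_div, ENNReal.rpow_rpow_inv hq.ne',
    ENNReal.ofReal_rpow_of_nonneg (by positivity) (by positivity), ← Real.rpow_mul hT0.le,
    div_mul_eq_mul_div, mul_inv_cancel₀ hq.ne', ← one_div] at this

end LowerBounds

lemma ENNReal.eq_top_of_forall_mul_ofReal_rpow_le {h S : ℝ≥0∞} (hh : h ≠ 0) {r : ℝ} (hr : 0 < r)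
    (H : ∀ T : ℝ, 0 < T → h * ENNReal.ofReal (T ^ r) ≤ S) : S = ⊤ := by
  have hlim : Tendsto (fun T : ℝ ↦ h * ENNReal.ofReal (T ^ r)) atTop (𝓝 ⊤) := by
    have := ENNReal.Tendsto.const_mul (a := h)
      (ENNReal.tendsto_ofReal_atTop.comp (tendsto_rpow_atTop hr)) (Or.inl ENNReal.top_ne_zero)
    rwa [ENNReal.mul_top hh] at this
  exact top_le_iff.1 (le_of_tendsto hlim ((eventually_gt_atTop (0 : ℝ)).mono H))

theorem stmt_13_general {X : Type*} [MeasurableSpace X] (μ : Measure X) [SigmaFinite μ]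
    (τ : X → X) (p q : ℝ) (hp : 1 < p) (hq : 1 ≤ q)
    (hsup : ∀ A : Set X, MeasurableSet A → 0 < μ A → μ A < ⊤ →
      (⨆ n : ℕ, μ ((τ^[n]) ⁻¹' A)) = ⊤) :
    ∀ g : X → ℂ, Measurable g → ¬ g =ᵐ[μ] 0 → lorentzNorm μ g p q < ⊤ →
      (⨆ n : ℕ, lorentzNorm μ (g ∘ τ^[n]) p q) = ⊤ := by
  intro g hg hg0 _
  obtain ⟨h, hh0, hμh⟩ := exists_measure_lt_nnnorm_ne_zero hg0
  obtain ⟨A, hAm, hAsub, hA0, hAfin⟩ := Measure.exists_subset_measure_lt_top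
    (measurableSet_lt measurable_const hg.nnnorm.coe_nnreal_ennreal) (pos_iff_ne_zero.2 hμh)
  refine ENNReal.eq_top_of_forall_mul_ofReal_rpow_le hh0 (r := 1 / p) (by positivity)
    fun T hT ↦ ?_
  have hT_lt : ENNReal.ofReal T < ⨆ n : ℕ, μ ((τ^[n]) ⁻¹' A) := by
    rw [hsup A hAm hA0 hAfin]
    exact ENNReal.ofReal_lt_top
  obtain ⟨n, hn⟩ := lt_iSup_iff.1 hT_lt
  have hlevel : ENNReal.ofReal T < μ {x | h < (‖(g ∘ τ^[n]) x‖₊ : ℝ≥0∞)} :=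
    hn.trans_le (measure_mono fun _ hx ↦ hAsub hx)
  exact (mul_ofReal_rpow_le_lorentzNorm (by positivity) (by positivity) hT hlevel).trans
    (le_iSup (fun n ↦ lorentzNorm μ (g ∘ τ^[n]) p q) n)

/-- if `sup_n μ(τ^{-n} A) = ∞` for all measurable `A` with
`0 < μ(A) < ∞`, then `C_τ` is positively expansive:
`sup_n ‖C_τ^n g‖_{pq} = ∞` for every nonzero `g ∈ L^{pq}`. -/
theorem stmt_13 {X : Type*} [MeasurableSpace X] (μ : Measure X) [SigmaFinite μ]
    (τ : X → X) (hns : Nonsingular μ τ)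
    (p q : ℝ) (hp : 1 < p) (hq : 1 ≤ q)
    (hbdd : ∃ C : ℝ≥0∞, C < ⊤ ∧
      ∀ g : X → ℂ, lorentzNorm μ (g ∘ τ) p q ≤ C * lorentzNorm μ g p q)
    (hsup : ∀ A : Set X, MeasurableSet A → 0 < μ A → μ A < ⊤ →
      (⨆ n : ℕ, μ ((τ^[n]) ⁻¹' A)) = ⊤) :
    ∀ g : X → ℂ, Measurable g → ¬ g =ᵐ[μ] 0 → lorentzNorm μ g p q < ⊤ →
      (⨆ n : ℕ, lorentzNorm μ (g ∘ τ^[n]) p q) = ⊤ :=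
  stmt_13_general μ τ p q hp hq hsup
end

section
/- Suppose (X, 𝔄, μ) is a purely atomic σ-finite measure space with atoms (A_k) each of positive finite measure, and τ is a non-singular transformation mapping atoms to unions of atoms. If for every M > 0 there exists m ∈ ℕ such that μ(τ^{-n}(A_k)) ≥ M·μ(A_k) for all n ≥ m and all atoms A_k, then for every simple function g ∈ L^{pq}(X) with ‖g‖_{pq} = 1 and all n ≥ m, ‖C_τ^n g‖_{pq}^p ≥ M. -/
open MeasureTheory Filter Set
open scoped ENNReal NNReal

/-! Since `g` is constant on atoms, every superlevel set `{|g| > λ}` is a union of atoms, so the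
expansion hypothesis gives `μ{|g ∘ τⁿ| > λ} ≥ M μ{|g| > λ}`. Hence `(g ∘ τⁿ)*(t) ≥ g*(t / M)` and
`(g ∘ τⁿ)**(M t) ≥ g**(t)`, and the substitution `t = M u` in the integral defining `‖·‖_{pq}^q`
gives `‖g ∘ τⁿ‖_{pq}^q ≥ M^{q/p} ‖g‖_{pq}^q`. -/

lemma ofReal_mul_setLIntegral_comp_mul_left (f : ℝ → ℝ≥0∞) {b : ℝ} (hb : 0 < b) (s : Set ℝ) :
    ENNReal.ofReal b * ∫⁻ x in (b * ·) ⁻¹' s, f (b * x) = ∫⁻ x in s, f x := by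
  have he : MeasurableEmbedding (b * ·) := (Homeomorph.mulLeft₀ b hb.ne').measurableEmbedding
  rw [← he.lintegral_map, ← he.restrict_map, Real.map_volume_mul_left hb.ne', Measure.restrict_smul,
    lintegral_smul_measure, smul_eq_mul, ← mul_assoc, abs_of_pos (inv_pos.mpr hb),
    ← ENNReal.ofReal_mul hb.le, mul_inv_cancel₀ hb.ne', ENNReal.ofReal_one, one_mul]

section Atoms

variable {X ι β : Type*} {A : ι → Set X}

lemma preimage_eq_biUnion_of_constOn (hcover : ⋃ k, A k = univ) {g : X → β}
    (hconst : ∀ k, ∀ x ∈ A k, ∀ y ∈ A k, g x = g y) (U : Set β) :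
    g ⁻¹' U = ⋃ k ∈ {k | A k ⊆ g ⁻¹' U}, A k := by
  refine Subset.antisymm (fun x hx => ?_) (iUnion₂_subset fun k hk => hk)
  obtain ⟨k, hxk⟩ := mem_iUnion.mp (hcover.symm ▸ mem_univ x : x ∈ ⋃ k, A k)
  refine mem_biUnion (fun y hy => ?_) hxk
  simpa only [mem_preimage, hconst k y hy x hxk] using hx

variable [Countable ι] [MeasurableSpace X] {μ : Measure X}

lemma mul_measure_biUnion_le_measure_preimage (hmeas : ∀ k, MeasurableSet (A k))
    (hdisj : Pairwise (Function.onFun Disjoint A)) {T : X → X} (hT : Measurable T) {c : ℝ≥0∞}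
    (hexp : ∀ k, c * μ (A k) ≤ μ (T ⁻¹' A k)) (K : Set ι) :
    c * μ (⋃ k ∈ K, A k) ≤ μ (T ⁻¹' ⋃ k ∈ K, A k) := by
  rw [preimage_iUnion₂, measure_biUnion K.to_countable (hdisj.set_pairwise K) fun k _ => hmeas k,
    measure_biUnion K.to_countable ((hdisj.mono fun i j h => h.preimage T).set_pairwise K)
      fun k _ => hT (hmeas k), ← ENNReal.tsum_mul_left]
  exact ENNReal.tsum_le_tsum fun k => hexp k

lemma mul_measure_lt_nnnorm_le_comp (hmeas : ∀ k, MeasurableSet (A k))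
    (hdisj : Pairwise (Function.onFun Disjoint A)) (hcover : ⋃ k, A k = univ) {T : X → X}
    (hT : Measurable T) {c : ℝ≥0∞} (hexp : ∀ k, c * μ (A k) ≤ μ (T ⁻¹' A k))
    {g : X → ℂ} (hconst : ∀ k, ∀ x ∈ A k, ∀ y ∈ A k, g x = g y) (l : ℝ≥0∞) :
    c * μ {x | l < ‖g x‖₊} ≤ μ {x | l < ‖(g ∘ T) x‖₊} := by
  let U : Set ℂ := {z | l < ‖z‖₊}
  change c * μ (g ⁻¹' U) ≤ μ (T ⁻¹' (g ⁻¹' U))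
  rw [preimage_eq_biUnion_of_constOn hcover hconst U]
  exact mul_measure_biUnion_le_measure_preimage hmeas hdisj hT hexp _

end Atoms

section Lorentz

variable {X : Type*} [MeasurableSpace X] {μ : Measure X}

variable {g h : X → ℂ} {M : ℝ}

lemma rearr_div_le_rearr (hM : 0 < M)
    (hdist : ∀ l : ℝ≥0∞, ENNReal.ofReal M * μ {x | l < ‖g x‖₊} ≤ μ {x | l < ‖h x‖₊}) (t : ℝ) :
    rearr μ g (t / M) ≤ rearr μ h t := by
  refine sInf_le_sInf fun l hl => show μ _ ≤ ENNReal.ofReal (t / M) from ?_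
  rw [ENNReal.ofReal_div_of_pos hM,
    ENNReal.le_div_iff_mul_le (by simp [hM]) (Or.inl ENNReal.ofReal_ne_top), mul_comm]
  exact (hdist l).trans hl

lemma maxFun_le_maxFun_mul (hM : 0 < M) (hrearr : ∀ t, rearr μ g (t / M) ≤ rearr μ h t)
    (u : ℝ) : maxFun μ g u ≤ maxFun μ h (M * u) := by
  have hc : ENNReal.ofReal M ≠ 0 := by simp [hM]
  have hscale : ENNReal.ofReal M * ∫⁻ s in Ioc 0 u, rearr μ g s
      = ∫⁻ s in Ioc 0 (M * u), rearr μ g (s / M) := by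
    rw [← ofReal_mul_setLIntegral_comp_mul_left (fun s => rearr μ g (s / M)) hM,
      preimage_const_mul_Ioc₀ _ _ hM, zero_div, mul_div_cancel_left₀ _ hM.ne']
    simp only [mul_div_cancel_left₀ _ hM.ne']
  calc maxFun μ g u
      = (ENNReal.ofReal (M * u))⁻¹ * (ENNReal.ofReal M * ∫⁻ s in Ioc 0 u, rearr μ g s) := by
        rw [maxFun, ENNReal.ofReal_mul hM.le,
          ENNReal.mul_inv (Or.inl hc) (Or.inl ENNReal.ofReal_ne_top), mul_assoc,
          mul_left_comm (ENNReal.ofReal u)⁻¹, ENNReal.inv_mul_cancel_left hc ENNReal.ofReal_ne_top]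
    _ ≤ maxFun μ h (M * u) := by
        rw [hscale, maxFun]
        gcongr with s
        exact hrearr s

variable {p q : ℝ}

lemma rpow_mul_lorentzIntegrand_le (hM : 0 < M) (hq : 0 ≤ q) {u : ℝ} (hu : 0 ≤ u) {a b : ℝ≥0∞}
    (hab : a ≤ b) :
    ENNReal.ofReal M ^ (q / p) * ((ENNReal.ofReal (u ^ (1 / p)) * a) ^ q / ENNReal.ofReal u)
      ≤ ENNReal.ofReal M
        * ((ENNReal.ofReal ((M * u) ^ (1 / p)) * b) ^ q / ENNReal.ofReal (M * u)) := by
  have hc : ENNReal.ofReal M ≠ 0 := by simp [hM]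
  rw [Real.mul_rpow hM.le hu, ENNReal.ofReal_mul (by positivity), ENNReal.ofReal_mul hM.le,
    ← ENNReal.ofReal_rpow_of_pos hM, mul_assoc, ENNReal.mul_rpow_of_nonneg (_ ^ (1 / p)) _ hq,
    ← ENNReal.rpow_mul, ← mul_div_assoc (ENNReal.ofReal M),
    ENNReal.mul_div_mul_left _ _ hc ENNReal.ofReal_ne_top, one_div_mul_eq_div, mul_div_assoc]
  gcongr

lemma rpow_mul_lorentzQ_le (hM : 0 < M) (hq : 0 ≤ q)
    (hmax : ∀ u, maxFun μ g u ≤ maxFun μ h (M * u)) :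
    ENNReal.ofReal M ^ (q / p) * lorentzQ μ g p q ≤ lorentzQ μ h p q := by
  rw [lorentzQ, lorentzQ, mul_left_comm, ← ofReal_mul_setLIntegral_comp_mul_left
    (fun t => (ENNReal.ofReal (t ^ (1 / p)) * maxFun μ h t) ^ q / ENNReal.ofReal t) hM,
    preimage_const_mul_Ioi₀ _ hM, zero_div, ← lintegral_const_mul' _ _ ENNReal.ofReal_ne_top]
  gcongr
  exact lintegral_const_mul_le _ _ |>.trans <| setLIntegral_mono' measurableSet_Ioi fun u hu =>
    rpow_mul_lorentzIntegrand_le hM hq (le_of_lt hu) (hmax u)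

lemma ofReal_mul_lorentzNorm_rpow_le (hM : 0 < M) (hp : 0 < p) (hq : 0 < q)
    (hdist : ∀ l : ℝ≥0∞, ENNReal.ofReal M * μ {x | l < ‖g x‖₊} ≤ μ {x | l < ‖h x‖₊}) :
    ENNReal.ofReal M * lorentzNorm μ g p q ^ p ≤ lorentzNorm μ h p q ^ p := by
  have hQ := rpow_mul_lorentzQ_le (p := p) hM hq.le
    (maxFun_le_maxFun_mul hM (rearr_div_le_rearr hM hdist))
  calc ENNReal.ofReal M * lorentzNorm μ g p q ^ p
      = (ENNReal.ofReal M ^ (q / p) * lorentzQ μ g p q) ^ (p / q) := by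
        rw [ENNReal.mul_rpow_of_nonneg _ _ (by positivity), lorentzNorm, ← ENNReal.rpow_mul,
          ← ENNReal.rpow_mul, one_div_mul_eq_div,
          show q / p * (p / q) = 1 by field_simp, ENNReal.rpow_one]
    _ ≤ lorentzQ μ h p q ^ (p / q) := by gcongr
    _ = lorentzNorm μ h p q ^ p := by rw [lorentzNorm, ← ENNReal.rpow_mul, one_div_mul_eq_div]

end Lorentz

theorem stmt_15_general {X : Type*} [MeasurableSpace X] (μ : Measure X)
    (A : ℕ → Set X) (hmeas : ∀ k, MeasurableSet (A k))
    (hdisj : Pairwise (Function.onFun Disjoint A))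
    (hcover : (⋃ k, A k) = Set.univ)
    (τ : X → X) (hns : Nonsingular μ τ)
    (p q : ℝ) (hp : 1 < p) (hq : 1 ≤ q)
    (M : ℝ) (hM : 0 < M) (m : ℕ)
    (hexp : ∀ n ≥ m, ∀ k, ENNReal.ofReal M * μ (A k) ≤ μ ((τ^[n]) ⁻¹' (A k))) :
    ∀ g : X → ℂ, Measurable g →
      (∀ k, ∀ x ∈ A k, ∀ y ∈ A k, g x = g y) →
      lorentzNorm μ g p q = 1 →
      ∀ n ≥ m, ENNReal.ofReal M ≤ lorentzNorm μ (g ∘ τ^[n]) p q ^ p := by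
  intro g _ hconst hnorm n hn
  have hdist :=
    mul_measure_lt_nnnorm_le_comp hmeas hdisj hcover (hns.1.iterate n) (hexp n hn) hconst
  simpa only [hnorm, ENNReal.one_rpow, mul_one] using
    ofReal_mul_lorentzNorm_rpow_le hM (zero_lt_one.trans hp) (zero_lt_one.trans_le hq) hdist

/-- on a purely atomic space, if `μ(τ^{-n}(A_k)) ≥ M μ(A_k)` for all
`n ≥ m` and all atoms, then every simple unit vector `g` satisfies
`‖C_τ^n g‖_{pq}^p ≥ M` for all `n ≥ m`. -/
theorem stmt_15 {X : Type*} [MeasurableSpace X] (μ : Measure X) [SigmaFinite μ]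
    (A : ℕ → Set X) (hmeas : ∀ k, MeasurableSet (A k))
    (hpos : ∀ k, 0 < μ (A k)) (hfin : ∀ k, μ (A k) < ⊤)
    (hdisj : Pairwise (Function.onFun Disjoint A))
    (hcover : (⋃ k, A k) = Set.univ)
    (hatoms : ∀ k, ∀ B : Set X, MeasurableSet B → B ⊆ A k → μ B = 0 ∨ μ B = μ (A k))
    (τ : X → X) (hns : Nonsingular μ τ)
    (hunions : ∀ k, ∃ S : Set ℕ, τ ⁻¹' (A k) = ⋃ j ∈ S, A j)
    (p q : ℝ) (hp : 1 < p) (hq : 1 ≤ q)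
    (M : ℝ) (hM : 0 < M) (m : ℕ)
    (hexp : ∀ n ≥ m, ∀ k, ENNReal.ofReal M * μ (A k) ≤ μ ((τ^[n]) ⁻¹' (A k))) :
    ∀ g : X → ℂ, Measurable g →
      (∀ k, ∀ x ∈ A k, ∀ y ∈ A k, g x = g y) →
      lorentzNorm μ g p q = 1 →
      ∀ n ≥ m, ENNReal.ofReal M ≤ lorentzNorm μ (g ∘ τ^[n]) p q ^ p :=
  stmt_15_general μ A hmeas hdisj hcover τ hns p q hp hq M hM m hexp
end

section
/- Let (X, 𝔄, μ) be a finite measure space, τ : X → X non-singular with C_τ bounded on L^{pq}(X) (1 < p < ∞, 1 ≤ q < ∞). If there exists a measurable set A with μ(A) > 0, liminf_{n→∞} μ(τ^{-n}(A)) = 0 and limsup_{n→∞} μ(τ^{-n}(A)) > 0, then the characteristic function χ_A is a semi-irregular vector for C_τ, and hence C_τ admits a semi-irregular vector. -/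
/-!
The decreasing rearrangement of `χ_B` is the indicator of `[0, μ B)`, so
`χ_B** (t) = min 1 (μ B / t)` and the Lorentz integral of `χ_B` splits at `t = μ B` into two
power integrals; altogether `‖χ_B‖_{pq} = (p / (p - 1)) ^ (1 / q) * μ B ^ (1 / p)`.
Since `C_τ^n χ_A = χ_{τ^{-n} A}`, the norms along the orbit are the image of `μ (τ^{-n} A)`
under an increasing continuous map vanishing only at `0`, and such a map commutes with `liminf` and
`limsup`.
-/

open MeasureTheory Filter Set
open scoped ENNReal NNReal

lemma lintegral_Ioc_rpow_sub_one {r m : ℝ} (hr : 0 < r) (hm : 0 ≤ m) :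
    ∫⁻ t in Ioc 0 m, ENNReal.ofReal (t ^ (r - 1)) = ENNReal.ofReal (m ^ r / r) := by
  have hint : IntegrableOn (fun t : ℝ => t ^ (r - 1)) (Ioc 0 m) :=
    (intervalIntegrable_iff_integrableOn_Ioc_of_le hm).1
      (intervalIntegral.intervalIntegrable_rpow' (by linarith))
  rw [← ofReal_integral_eq_lintegral_ofReal hint
    (ae_restrict_of_forall_mem measurableSet_Ioc fun t ht => Real.rpow_nonneg ht.1.le _),
    ← intervalIntegral.integral_of_le hm, integral_rpow (Or.inl (by linarith)), sub_add_cancel,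
    Real.zero_rpow hr.ne', sub_zero]

lemma lintegral_Ioi_rpow_neg_sub_one {r m : ℝ} (hr : 0 < r) (hm : 0 < m) :
    ∫⁻ t in Ioi m, ENNReal.ofReal (t ^ (-r - 1)) = ENNReal.ofReal (m ^ (-r) / r) := by
  have hlt : -r - 1 < -1 := by linarith
  rw [← ofReal_integral_eq_lintegral_ofReal (integrableOn_Ioi_rpow_of_lt hlt hm)
    (ae_restrict_of_forall_mem measurableSet_Ioi fun t ht => Real.rpow_nonneg (hm.trans ht).le _),
    integral_Ioi_rpow_of_lt hlt hm, sub_add_cancel, neg_div, div_neg, neg_neg]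

lemma lintegral_Ioi_zero_rpow (s : ℝ) :
    ∫⁻ t in Ioi 0, ENNReal.ofReal (t ^ s) = ⊤ := by
  by_contra h
  refine not_integrableOn_Ioi_rpow s ((lintegral_ofReal_ne_top_iff_integrable ?_ ?_).1 h)
  · exact (measurable_id.pow_const s).aestronglyMeasurable
  · exact ae_restrict_of_forall_mem measurableSet_Ioi fun t ht => Real.rpow_nonneg ht.le _

lemma lorentzQ_integrand_ofReal {p q t c : ℝ} (hq : 0 ≤ q) (ht : 0 < t) (hc : 0 ≤ c) :
    (ENNReal.ofReal (t ^ (1/p)) * ENNReal.ofReal c) ^ q / ENNReal.ofReal t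
      = ENNReal.ofReal (c ^ q * t ^ (q/p - 1)) := by
  rw [← ENNReal.ofReal_mul (by positivity), ENNReal.ofReal_rpow_of_nonneg (by positivity) hq,
    ← ENNReal.ofReal_div_of_pos ht, Real.mul_rpow (by positivity) hc, ← Real.rpow_mul ht.le,
    Real.rpow_sub ht, Real.rpow_one]
  ring_nf

section IndicatorOne

variable {X : Type*} [MeasurableSpace X] (μ : Measure X) (B : Set X) {p q : ℝ}

lemma rearr_indicator_one (t : ℝ) :
    rearr μ (B.indicator fun _ => (1:ℂ)) t = if ENNReal.ofReal t < μ B then 1 else 0 := by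
  have hlevel : ∀ l : ℝ≥0∞,
      {x | l < (‖B.indicator (fun _ => (1:ℂ)) x‖₊ : ℝ≥0∞)}
      = if l < 1 then B else ∅ := by
    intro l
    ext x
    by_cases hx : x ∈ B <;> by_cases hl : l < 1 <;> simp [hx, hl]
  unfold rearr
  simp_rw [hlevel]
  split_ifs with h
  · have hIci : {l : ℝ≥0∞ | μ (if l < 1 then B else ∅) ≤ ENNReal.ofReal t} = Ici 1 := by
      ext l
      by_cases hl : l < 1 <;> simp [hl, not_le.2 h, not_lt.1]
    rw [hIci, csInf_Ici]
  · have huniv : {l : ℝ≥0∞ | μ (if l < 1 then B else ∅) ≤ ENNReal.ofReal t} = univ := by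
      ext l
      by_cases hl : l < 1 <;> simp [hl, not_lt.1 h]
    rw [huniv, sInf_univ]
    rfl

lemma setLIntegral_Ioc_rearr_indicator_one (t : ℝ) :
    ∫⁻ s in Ioc (0:ℝ) t, rearr μ (B.indicator fun _ => (1:ℂ)) s
      = min (ENNReal.ofReal t) (μ B) := by
  set S : Set ℝ := {s | ENNReal.ofReal s < μ B}
  have hS : MeasurableSet S := measurableSet_lt ENNReal.measurable_ofReal measurable_const
  have hu : min (ENNReal.ofReal t) (μ B) ≠ ⊤ :=
    ((min_le_left _ _).trans_lt ENNReal.ofReal_lt_top).ne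
  set u := (min (ENNReal.ofReal t) (μ B)).toReal
  have hlower : Ioo 0 u ⊆ S ∩ Ioc 0 t := by
    rintro s ⟨hs0, hsu⟩
    have : ENNReal.ofReal s < min (ENNReal.ofReal t) (μ B) :=
      (ENNReal.ofReal_lt_iff_lt_toReal hs0.le hu).2 hsu
    exact ⟨this.trans_le (min_le_right _ _), hs0,
      (ENNReal.ofReal_le_ofReal_iff' .. |>.1 (this.le.trans (min_le_left _ _))).resolve_right
        (not_le.2 hs0)⟩
  have hupper : S ∩ Ioc 0 t ⊆ Ioc 0 u := by
    rintro s ⟨hsS, hs0, hst⟩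
    exact ⟨hs0, (ENNReal.ofReal_le_iff_le_toReal hu).1
      (le_min (ENNReal.ofReal_le_ofReal hst) hsS.le)⟩
  have hvol : volume (S ∩ Ioc 0 t) = ENNReal.ofReal u := by
    refine le_antisymm ((measure_mono hupper).trans_eq ?_)
      (le_trans (le_of_eq ?_) (measure_mono hlower))
    · rw [Real.volume_Ioc, sub_zero]
    · rw [Real.volume_Ioo, sub_zero]
  have hrearr : EqOn (rearr μ (B.indicator fun _ => (1:ℂ))) (S.indicator 1) (Ioc 0 t) := by
    intro s _
    simp only [rearr_indicator_one, S, indicator_apply, Pi.one_apply]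
    rfl
  rw [setLIntegral_congr_fun measurableSet_Ioc hrearr, lintegral_indicator_one hS,
    Measure.restrict_apply hS, hvol, ENNReal.ofReal_toReal hu]

lemma maxFun_indicator_one_of_le {t : ℝ} (ht : 0 < t) (htB : ENNReal.ofReal t ≤ μ B) :
    maxFun μ (B.indicator fun _ => (1:ℂ)) t = 1 := by
  rw [maxFun, setLIntegral_Ioc_rearr_indicator_one, min_eq_left htB,
    ENNReal.inv_mul_cancel (by simpa using ht) ENNReal.ofReal_ne_top]

lemma maxFun_indicator_one_of_ge {t : ℝ} (hBt : μ B ≤ ENNReal.ofReal t) :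
    maxFun μ (B.indicator fun _ => (1:ℂ)) t = (ENNReal.ofReal t)⁻¹ * μ B := by
  rw [maxFun, setLIntegral_Ioc_rearr_indicator_one, min_eq_right hBt]

lemma lorentzQ_indicator_one_of_eq_zero (hq : 0 < q) (hB : μ B = 0) :
    lorentzQ μ (B.indicator fun _ => (1:ℂ)) p q = 0 := by
  have hzero : ∀ t ∈ Ioi (0:ℝ),
      (ENNReal.ofReal (t ^ (1/p)) * maxFun μ (B.indicator fun _ => (1:ℂ)) t) ^ q
        / ENNReal.ofReal t = 0 := by
    intro t _
    rw [maxFun_indicator_one_of_ge μ B (hB.trans_le bot_le), hB, mul_zero, mul_zero,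
      ENNReal.zero_rpow_of_pos hq, ENNReal.zero_div]
  rw [lorentzQ, setLIntegral_congr_fun measurableSet_Ioi hzero, lintegral_zero, mul_zero]

lemma lorentzQ_indicator_one_of_eq_top (hp : 0 < p) (hq : 0 < q) (hB : μ B = ⊤) :
    lorentzQ μ (B.indicator fun _ => (1:ℂ)) p q = ⊤ := by
  have hone : ∀ t ∈ Ioi (0:ℝ),
      (ENNReal.ofReal (t ^ (1/p)) * maxFun μ (B.indicator fun _ => (1:ℂ)) t) ^ q
        / ENNReal.ofReal t = ENNReal.ofReal (t ^ (q/p - 1)) := by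
    intro t ht
    rw [maxFun_indicator_one_of_le μ B ht (hB ▸ le_top), ← ENNReal.ofReal_one,
      lorentzQ_integrand_ofReal hq.le ht zero_le_one, Real.one_rpow, one_mul]
  rw [lorentzQ, setLIntegral_congr_fun measurableSet_Ioi hone, lintegral_Ioi_zero_rpow,
    ENNReal.mul_top (by simp [div_pos hq hp])]

lemma lorentzQ_indicator_one_of_ne_zero_of_ne_top (hp : 1 < p) (hq : 0 < q) (h0 : μ B ≠ 0)
    (hB : μ B ≠ ⊤) :
    lorentzQ μ (B.indicator fun _ => (1:ℂ)) p q
      = ENNReal.ofReal (p / (p - 1) * (μ B).toReal ^ (q / p)) := by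
  set m := (μ B).toReal
  have hm : 0 < m := ENNReal.toReal_pos h0 hB
  have hmB : μ B = ENNReal.ofReal m := (ENNReal.ofReal_toReal hB).symm
  have hr : 0 < q - q / p := by
    have : q / p < q := div_lt_self hq hp
    linarith
  have hnear : ∫⁻ t in Ioc 0 m,
      (ENNReal.ofReal (t ^ (1/p)) * maxFun μ (B.indicator fun _ => (1:ℂ)) t) ^ q
        / ENNReal.ofReal t = ENNReal.ofReal (m ^ (q/p) / (q/p)) := by
    rw [← lintegral_Ioc_rpow_sub_one (by positivity) hm.le]
    refine setLIntegral_congr_fun measurableSet_Ioc fun t ht => ?_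
    rw [maxFun_indicator_one_of_le μ B ht.1 (hmB ▸ ENNReal.ofReal_le_ofReal ht.2),
      ← ENNReal.ofReal_one, lorentzQ_integrand_ofReal hq.le ht.1 zero_le_one,
      Real.one_rpow, one_mul]
  have hfar : ∫⁻ t in Ioi m,
      (ENNReal.ofReal (t ^ (1/p)) * maxFun μ (B.indicator fun _ => (1:ℂ)) t) ^ q
        / ENNReal.ofReal t
      = ENNReal.ofReal (m ^ q) * ENNReal.ofReal (m ^ (-(q - q/p)) / (q - q/p)) := by
    rw [← lintegral_Ioi_rpow_neg_sub_one hr hm, ← lintegral_const_mul _ (by fun_prop)]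
    refine setLIntegral_congr_fun measurableSet_Ioi fun t ht => ?_
    have ht0 : 0 < t := hm.trans ht
    rw [maxFun_indicator_one_of_ge μ B (hmB ▸ ENNReal.ofReal_le_ofReal ht.le), hmB,
      ← ENNReal.div_eq_inv_mul, ← ENNReal.ofReal_div_of_pos ht0,
      lorentzQ_integrand_ofReal hq.le ht0 (by positivity), ← ENNReal.ofReal_mul
        (by positivity), Real.div_rpow hm.le ht0.le, show -(q - q/p) - 1 = (q/p - 1) - q by ring,
      Real.rpow_sub ht0 _ q]
    congr 1
    ring
  rw [lorentzQ, ← Ioc_union_Ioi_eq_Ioi hm.le,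
    lintegral_union measurableSet_Ioi (Ioc_disjoint_Ioi le_rfl), hnear, hfar,
    ← ENNReal.ofReal_mul (by positivity), ← ENNReal.ofReal_add (by positivity) (by positivity),
    ← ENNReal.ofReal_mul (by positivity)]
  have hpow : m ^ q * m ^ (-(q - q/p)) = m ^ (q/p) := by
    rw [← Real.rpow_add hm]
    ring_nf
  congr 1
  rw [← mul_div_assoc, hpow]
  have : p - 1 ≠ 0 := by linarith
  field_simp
  ring

lemma lorentzQ_indicator_one (hp : 1 < p) (hq : 0 < q) :
    lorentzQ μ (B.indicator fun _ => (1:ℂ)) p q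
      = ENNReal.ofReal (p / (p - 1)) * μ B ^ (q / p) := by
  have hqp : 0 < q / p := div_pos hq (by linarith)
  rcases eq_or_ne (μ B) 0 with h0 | h0
  · rw [lorentzQ_indicator_one_of_eq_zero μ B hq h0, h0, ENNReal.zero_rpow_of_pos hqp, mul_zero]
  rcases eq_or_ne (μ B) ⊤ with htop | htop
  · have hc : ENNReal.ofReal (p / (p - 1)) ≠ 0 := by
      simp [div_pos (zero_lt_one.trans hp) (sub_pos.2 hp)]
    rw [lorentzQ_indicator_one_of_eq_top μ B (by linarith) hq htop, htop,
      ENNReal.top_rpow_of_pos hqp, ENNReal.mul_top hc]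
  · rw [lorentzQ_indicator_one_of_ne_zero_of_ne_top μ B hp hq h0 htop,
      ENNReal.ofReal_mul (div_nonneg (by linarith) (by linarith)),
      ← ENNReal.ofReal_rpow_of_nonneg ENNReal.toReal_nonneg hqp.le, ENNReal.ofReal_toReal htop]

lemma lorentzNorm_indicator_one (hp : 1 < p) (hq : 0 < q) :
    lorentzNorm μ (B.indicator fun _ => (1:ℂ)) p q
      = ENNReal.ofReal (p / (p - 1)) ^ (1 / q) * μ B ^ (1 / p) := by
  rw [lorentzNorm, lorentzQ_indicator_one μ B hp hq,
    ENNReal.mul_rpow_of_nonneg _ _ (by positivity), ← ENNReal.rpow_mul,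
    show q / p * (1 / q) = 1 / p by field_simp]

end IndicatorOne

lemma Filter.liminf_comp_eq_zero_and_limsup_comp_pos {ι : Type*} {l : Filter ι} [l.NeBot]
    {F : ℝ≥0∞ → ℝ≥0∞} (hmono : Monotone F) (hcont : Continuous F) (hF0 : F 0 = 0)
    (hFpos : ∀ x, 0 < x → 0 < F x) {a : ι → ℝ≥0∞} (hinf : liminf a l = 0)
    (hsup : 0 < limsup a l) :
    liminf (F ∘ a) l = 0 ∧ 0 < limsup (F ∘ a) l := by
  rw [← hmono.map_liminf_of_continuousAt a hcont.continuousAt,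
    ← hmono.map_limsup_of_continuousAt a hcont.continuousAt, hinf]
  exact ⟨hF0, hFpos _ hsup⟩

theorem stmt_17_general {X : Type*} [MeasurableSpace X] (μ : Measure X)
    (τ : X → X)
    (p q : ℝ) (hp : 1 < p) (hq : 1 ≤ q)
    (A : Set X)
    (hinf : Filter.liminf (fun n : ℕ => μ ((τ^[n]) ⁻¹' A)) Filter.atTop = 0)
    (hsup : 0 < Filter.limsup (fun n : ℕ => μ ((τ^[n]) ⁻¹' A)) Filter.atTop) :
    Filter.liminf
        (fun n : ℕ => lorentzNorm μ ((A.indicator fun _ => (1:ℂ)) ∘ τ^[n]) p q)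
        Filter.atTop = 0 ∧
      0 < Filter.limsup
        (fun n : ℕ => lorentzNorm μ ((A.indicator fun _ => (1:ℂ)) ∘ τ^[n]) p q)
        Filter.atTop := by
  have hq0 : 0 < q := by linarith
  have hp0 : 0 < 1 / p := by positivity
  set c := ENNReal.ofReal (p / (p - 1)) ^ (1 / q)
  have hc0 : c ≠ 0 := by
    simp [c, div_pos (zero_lt_one.trans hp) (sub_pos.2 hp)]
  have hctop : c ≠ ⊤ := ENNReal.rpow_ne_top_of_nonneg (by positivity) ENNReal.ofReal_ne_top
  have hnorm : (fun n : ℕ => lorentzNorm μ ((A.indicator fun _ => (1:ℂ)) ∘ τ^[n]) p q)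
      = (fun x => c * x ^ (1 / p)) ∘ fun n => μ ((τ^[n]) ⁻¹' A) := by
    ext n
    have hcomp :
        (A.indicator fun _ => (1:ℂ)) ∘ τ^[n] = (τ^[n] ⁻¹' A).indicator fun _ => 1 :=
      funext fun x => (indicator_comp_right (τ^[n])).symm
    rw [hcomp, lorentzNorm_indicator_one μ _ hp hq0]
    rfl
  rw [hnorm]
  refine Filter.liminf_comp_eq_zero_and_limsup_comp_pos ?_ ?_ ?_ ?_ hinf hsup
  · exact fun _ _ hxy => by gcongr
  · exact (ENNReal.continuous_const_mul hctop).comp ENNReal.continuous_rpow_const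
  · simp [zero_lt_one.trans hp]
  · exact fun x hx => ENNReal.mul_pos hc0 (ENNReal.rpow_pos_of_nonneg hx hp0.le).ne'

/-- on a finite measure space, if `liminf μ(τ^{-n}A) = 0` and
`limsup μ(τ^{-n}A) > 0` for some `A` of positive measure, then `χ_A` is a
semi-irregular vector for `C_τ`. -/
theorem stmt_17 {X : Type*} [MeasurableSpace X] (μ : Measure X) [IsFiniteMeasure μ]
    (τ : X → X) (hns : Nonsingular μ τ)
    (p q : ℝ) (hp : 1 < p) (hq : 1 ≤ q)
    (hbdd : ∃ C : ℝ≥0∞, C < ⊤ ∧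
      ∀ g : X → ℂ, lorentzNorm μ (g ∘ τ) p q ≤ C * lorentzNorm μ g p q)
    (A : Set X) (hA : MeasurableSet A) (hpos : 0 < μ A)
    (hinf : Filter.liminf (fun n : ℕ => μ ((τ^[n]) ⁻¹' A)) Filter.atTop = 0)
    (hsup : 0 < Filter.limsup (fun n : ℕ => μ ((τ^[n]) ⁻¹' A)) Filter.atTop) :
    Filter.liminf
        (fun n : ℕ => lorentzNorm μ ((A.indicator fun _ => (1:ℂ)) ∘ τ^[n]) p q)
        Filter.atTop = 0 ∧
      0 < Filter.limsup
        (fun n : ℕ => lorentzNorm μ ((A.indicator fun _ => (1:ℂ)) ∘ τ^[n]) p q)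
        Filter.atTop :=
  stmt_17_general μ τ p q hp hq A hinf hsup
end

section
/- Let (X, 𝔄, μ) be a measure space, τ : X → X non-singular with C_τ bounded on L^{pq}(X) (1 < p < ∞, 1 ≤ q < ∞), and suppose g ∈ L^{pq}(X) is nonzero with liminf_{n→∞} ‖C_τ^n g‖_{pq} = 0. Then there exists a measurable set A with 0 < μ(A) < ∞ and liminf_{n→∞} μ(τ^{-n}(A)) = 0. -/
open MeasureTheory Filter Set
open scoped ENNReal NNReal

/-!
Pick `c > 0` such that `A = {c < ‖g‖}` has positive measure. On `(0, t]` with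
`t < μ(τ⁻ⁿ A)` the maximal function of `g ∘ τⁿ` is at least `c`, so restricting the
Lorentz integral to `(t/2, t]` bounds `‖g ∘ τⁿ‖_{pq}` below by a positive constant depending
only on `t`. Hence `liminf μ(τ⁻ⁿ A) > 0` would contradict `liminf ‖g ∘ τⁿ‖_{pq} = 0`; the same
bound with `t → ∞` shows `μ A = ∞` is incompatible with `‖g‖_{pq} < ∞`.
-/

section

variable {X : Type*} [MeasurableSpace X] {μ : Measure X}

lemma exists_pos_measure_lt_nnnorm {E : Type*} [NormedAddCommGroup E] {g : X → E}
    (hne : ¬ g =ᵐ[μ] 0) : ∃ c : ℝ≥0, 0 < c ∧ μ {x | (c : ℝ≥0∞) < (‖g x‖₊ : ℝ≥0∞)} ≠ 0 := by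
  by_contra! hall
  refine hne (measure_mono_null (t := ⋃ n : ℕ, {x | ((1 / (n + 1) : ℝ≥0) : ℝ≥0∞) <
    (‖g x‖₊ : ℝ≥0∞)}) (fun x hx => ?_) (measure_iUnion_null fun n => hall _ (by positivity)))
  obtain ⟨n, hn⟩ := exists_nat_one_div_lt (nnnorm_pos.2 hx)
  exact mem_iUnion.2 ⟨n, ENNReal.coe_lt_coe.2 hn⟩

variable {h : X → ℂ}

lemma le_rearr_of_lt_measure {c : ℝ≥0∞} {s : ℝ}
    (hs : ENNReal.ofReal s < μ {x | c < (‖h x‖₊ : ℝ≥0∞)}) : c ≤ rearr μ h s := by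
  refine le_sInf fun l hl => ?_
  by_contra! hlt
  exact hs.not_ge ((measure_mono fun x hx => hlt.trans hx).trans hl)

lemma le_maxFun_of_lt_measure {c : ℝ≥0∞} {t : ℝ} (ht : 0 < t)
    (hμ : ENNReal.ofReal t < μ {x | c < (‖h x‖₊ : ℝ≥0∞)}) : c ≤ maxFun μ h t := by
  have hint : c * ENNReal.ofReal t ≤ ∫⁻ s in Ioc 0 t, rearr μ h s :=
    calc c * ENNReal.ofReal t = ∫⁻ _ in Ioc 0 t, c := by
          rw [setLIntegral_const, Real.volume_Ioc, sub_zero]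
      _ ≤ _ := setLIntegral_mono' measurableSet_Ioc fun s hs =>
          le_rearr_of_lt_measure ((ENNReal.ofReal_le_ofReal hs.2).trans_lt hμ)
  calc c = (ENNReal.ofReal t)⁻¹ * (c * ENNReal.ofReal t) := by
        rw [mul_comm c, ← mul_assoc, ENNReal.inv_mul_cancel (ENNReal.ofReal_pos.2 ht).ne'
          ENNReal.ofReal_ne_top, one_mul]
    _ ≤ maxFun μ h t := by rw [maxFun]; gcongr

-- On `(t/2, t]` the integrand of `lorentzQ` is at least `((t/2)^(1/p) c)^q / t`.
lemma ofReal_le_lorentzQ_of_lt_measure {p q : ℝ} (hp : 0 < p) (hq : 0 ≤ q) {c : ℝ≥0} {t : ℝ}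
    (ht : 0 < t) (hμ : ENNReal.ofReal t < μ {x | (c : ℝ≥0∞) < (‖h x‖₊ : ℝ≥0∞)}) :
    ENNReal.ofReal (q / p * ((t / 2) ^ (1 / p) * c) ^ q / 2) ≤ lorentzQ μ h p q := by
  have ht2 : 0 < t / 2 := half_pos ht
  have hint : (ENNReal.ofReal ((t / 2) ^ (1 / p)) * c) ^ q / ENNReal.ofReal t *
      ENNReal.ofReal (t / 2) ≤ ∫⁻ s in Ioi 0,
        (ENNReal.ofReal (s ^ (1 / p)) * maxFun μ h s) ^ q / ENNReal.ofReal s :=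
    calc _ = ∫⁻ _ in Ioc (t / 2) t,
          (ENNReal.ofReal ((t / 2) ^ (1 / p)) * c) ^ q / ENNReal.ofReal t := by
          rw [setLIntegral_const, Real.volume_Ioc, sub_half]
      _ ≤ _ := setLIntegral_mono' measurableSet_Ioc fun s hs => by
          gcongr
          · exact hs.1.le
          · exact le_maxFun_of_lt_measure (ht2.trans hs.1)
              ((ENNReal.ofReal_le_ofReal hs.2).trans_lt hμ)
          · exact hs.2
      _ ≤ _ := lintegral_mono_set fun s hs => ht2.trans hs.1
  calc _ = ENNReal.ofReal (q / p) * ((ENNReal.ofReal ((t / 2) ^ (1 / p)) * c) ^ q /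
        ENNReal.ofReal t * ENNReal.ofReal (t / 2)) := by
        rw [← ENNReal.ofReal_coe_nnreal, ← ENNReal.ofReal_mul (by positivity),
          ENNReal.ofReal_rpow_of_nonneg (by positivity) hq, ← ENNReal.ofReal_div_of_pos ht,
          ← ENNReal.ofReal_mul (by positivity), ← ENNReal.ofReal_mul (by positivity)]
        congr 1
        field_simp
    _ ≤ lorentzQ μ h p q := by
      rw [lorentzQ]
      gcongr

lemma measure_lt_top_of_lorentzNorm_lt_top {p q : ℝ} (hp : 0 < p) (hq : 0 < q) {c : ℝ≥0}
    (hc : 0 < c) (hfin : lorentzNorm μ h p q < ⊤) :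
    μ {x | (c : ℝ≥0∞) < (‖h x‖₊ : ℝ≥0∞)} < ⊤ := by
  by_contra! htop
  have hbound : Tendsto (fun t : ℝ => q / p * ((t / 2) ^ (1 / p) * c) ^ q / 2) atTop atTop :=
    ((tendsto_rpow_atTop hq).comp <|
      ((tendsto_rpow_atTop (by positivity)).comp (tendsto_id.atTop_div_const two_pos))
        |>.atTop_mul_const (by positivity : (0 : ℝ) < c))
      |>.const_mul_atTop (by positivity) |>.atTop_div_const two_pos
  have hQ : lorentzQ μ h p q = ⊤ := by
    refine ENNReal.eq_top_of_forall_nnreal_le fun r => ?_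
    obtain ⟨t, hrt, ht⟩ := ((hbound.eventually_ge_atTop (r : ℝ)).and (eventually_gt_atTop 0)).exists
    calc (r : ℝ≥0∞) = ENNReal.ofReal r := ENNReal.ofReal_coe_nnreal.symm
      _ ≤ _ := ENNReal.ofReal_le_ofReal hrt
      _ ≤ _ := ofReal_le_lorentzQ_of_lt_measure hp hq.le ht
          ((top_le_iff.1 htop).symm ▸ ENNReal.ofReal_lt_top)
  rw [lorentzNorm, hQ, ENNReal.top_rpow_of_pos (by positivity)] at hfin
  exact hfin.ne rfl

lemma liminf_measure_lt_nnnorm_eq_zero {ι : Type*} {l : Filter ι} {f : ι → X → ℂ} {p q : ℝ}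
    (hp : 0 < p) (hq : 0 < q) {c : ℝ≥0} (hc : 0 < c)
    (h0 : liminf (fun n => lorentzNorm μ (f n) p q) l = 0) :
    liminf (fun n => μ {x | (c : ℝ≥0∞) < (‖f n x‖₊ : ℝ≥0∞)}) l = 0 := by
  by_contra hL
  obtain ⟨t, -, ht0, htL⟩ := ENNReal.lt_iff_exists_real_btwn.1 (pos_iff_ne_zero.2 hL)
  have ht : 0 < t := ENNReal.ofReal_pos.1 ht0
  have hε : 0 < ENNReal.ofReal (q / p * ((t / 2) ^ (1 / p) * c) ^ q / 2) ^ (1 / q) :=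
    ENNReal.rpow_pos (ENNReal.ofReal_pos.2 (by positivity)) ENNReal.ofReal_ne_top
  have hle := le_liminf_of_le (f := l) (u := fun n => lorentzNorm μ (f n) p q)
    (by isBoundedDefault) <| (eventually_lt_of_lt_liminf htL).mono fun n hn =>
      ENNReal.rpow_le_rpow (ofReal_le_lorentzQ_of_lt_measure hp hq.le ht hn) (by positivity)
  exact hε.not_ge (h0 ▸ hle)

end

theorem stmt_18_general {X : Type*} [MeasurableSpace X] (μ : Measure X)
    (τ : X → X)
    (p q : ℝ) (hp : 1 < p) (hq : 1 ≤ q)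
    (g : X → ℂ) (hg : Measurable g) (hne : ¬ g =ᵐ[μ] 0)
    (hfin : lorentzNorm μ g p q < ⊤)
    (h0 : Filter.liminf (fun n : ℕ => lorentzNorm μ (g ∘ τ^[n]) p q) Filter.atTop = 0) :
    ∃ A : Set X, MeasurableSet A ∧ 0 < μ A ∧ μ A < ⊤ ∧
      Filter.liminf (fun n : ℕ => μ ((τ^[n]) ⁻¹' A)) Filter.atTop = 0 := by
  have hp0 : 0 < p := one_pos.trans hp
  have hq0 : 0 < q := one_pos.trans_le hq
  obtain ⟨c, hc, hA⟩ := exists_pos_measure_lt_nnnorm hne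
  exact ⟨{x | (c : ℝ≥0∞) < (‖g x‖₊ : ℝ≥0∞)},
    measurableSet_lt measurable_const hg.nnnorm.coe_nnreal_ennreal, pos_iff_ne_zero.2 hA,
    measure_lt_top_of_lorentzNorm_lt_top hp0 hq0 hc hfin,
    liminf_measure_lt_nnnorm_eq_zero (f := fun n => g ∘ τ^[n]) hp0 hq0 hc h0⟩

/-- if `g ≠ 0` in `L^{pq}` and `liminf ‖C_τ^n g‖_{pq} = 0`, then there
is a measurable `A` with `0 < μ(A) < ∞` and `liminf μ(τ^{-n}A) = 0`. -/
theorem stmt_18 {X : Type*} [MeasurableSpace X] (μ : Measure X)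
    (τ : X → X) (hns : Nonsingular μ τ)
    (p q : ℝ) (hp : 1 < p) (hq : 1 ≤ q)
    (hbdd : ∃ C : ℝ≥0∞, C < ⊤ ∧
      ∀ g : X → ℂ, lorentzNorm μ (g ∘ τ) p q ≤ C * lorentzNorm μ g p q)
    (g : X → ℂ) (hg : Measurable g) (hne : ¬ g =ᵐ[μ] 0)
    (hfin : lorentzNorm μ g p q < ⊤)
    (h0 : Filter.liminf (fun n : ℕ => lorentzNorm μ (g ∘ τ^[n]) p q) Filter.atTop = 0) :
    ∃ A : Set X, MeasurableSet A ∧ 0 < μ A ∧ μ A < ⊤ ∧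
      Filter.liminf (fun n : ℕ => μ ((τ^[n]) ⁻¹' A)) Filter.atTop = 0 :=
  stmt_18_general μ τ p q hp hq g hg hne hfin h0
end
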